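/- arXiv:1705.03827 — 5 statements merged into one kernel-verified Lean document; each statement's English description precedes it below -/
import Mathlib

section
/- As N → ∞, the normalized sum d_N/N = N⁻¹ ∑_{i=1}^N π_i(1 − π_i) converges ℙ-almost surely to d = f(1 − 𝔼[X₁²]/𝔼[X₁]²) + f(1−f)·𝔼[X₁²]/𝔼[X₁]² (equivalently, to f − f²·𝔼[X₁²]/𝔼[X₁]²). (Lemma 1 of the paper.) -/
open MeasureTheory ProbabilityTheory Filter Topology

/-!
Dividing numerator and denominator by `N`, the normalized sum equals
`f_N - f_N² · (N⁻¹ ∑ Xᵢ²) / (N⁻¹ ∑ Xᵢ)²`, where `f_N = n_N / N`. By the strong law of large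
numbers the two empirical moments converge almost surely to `𝔼[X₁²]` and `𝔼[X₁] > 0`,
so the whole expression converges to `f - f² 𝔼[X₁²] / 𝔼[X₁]²`.
-/

theorem integral_pos_of_ae_pos {α : Type*} [MeasurableSpace α] {μ : Measure α} [NeZero μ]
    {f : α → ℝ} (hf : ∀ᵐ x ∂μ, 0 < f x) (hfi : Integrable f μ) : 0 < ∫ x, f x ∂μ := by
  rw [integral_pos_iff_support_of_nonneg_ae (hf.mono fun _ hx => hx.le) hfi]
  have hsupport : Function.support f =ᵐ[μ] (Set.univ : Set α) :=
    ae_eq_univ.2 (ae_iff.1 (hf.mono fun _ hx => hx.ne'))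
  simpa [measure_congr hsupport] using NeZero.ne μ

theorem MeasureTheory.Integrable.of_integrable_sq {α : Type*} [MeasurableSpace α] {μ : Measure α}
    [IsFiniteMeasure μ] {f : α → ℝ} (hf : AEStronglyMeasurable f μ)
    (hf2 : Integrable (fun x => f x ^ 2) μ) : Integrable f μ :=
  ((memLp_two_iff_integrable_sq hf).2 hf2).integrable one_le_two

theorem strong_law_ae_real_comp {Ω β : Type*} [MeasurableSpace Ω] [MeasurableSpace β]
    {μ : Measure Ω} {Z : ℕ → Ω → β} (hindep : iIndepFun Z μ)
    (hident : ∀ i, IdentDistrib (Z i) (Z 0) μ μ) {g : β → ℝ} (hg : Measurable g)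
    (hint : Integrable (g ∘ Z 0) μ) :
    ∀ᵐ ω ∂μ, Tendsto (fun N : ℕ => (∑ i ∈ Finset.range N, g (Z i ω)) / N) atTop
      (𝓝 (∫ ω, g (Z 0 ω) ∂μ)) :=
  strong_law_ae_real (fun i => g ∘ Z i) hint
    (fun _ _ hij => (hindep.comp (fun _ => g) (fun _ => hg)).indepFun hij)
    (fun i => (hident i).comp hg)

theorem inv_mul_sum_mul_one_sub_div_sum {ι : Type*} (s : Finset ι) (x : ι → ℝ) (c N : ℝ)
    (hN : N ≠ 0) (hS : ∑ i ∈ s, x i ≠ 0) :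
    N⁻¹ * ∑ i ∈ s, (c * x i / ∑ j ∈ s, x j) * (1 - c * x i / ∑ j ∈ s, x j)
      = c / N - (c / N) ^ 2 * (((∑ i ∈ s, x i ^ 2) / N) / ((∑ i ∈ s, x i) / N) ^ 2) := by
  set S := ∑ j ∈ s, x j with hSdef
  have hterm : ∀ i ∈ s, (c * x i / S) * (1 - c * x i / S)
      = (c / S) * x i - (c / S) ^ 2 * x i ^ 2 :=
    fun i _ => by field_simp
  rw [Finset.sum_congr rfl hterm, Finset.sum_sub_distrib, ← Finset.mul_sum, ← Finset.mul_sum,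
    ← hSdef]
  field_simp

theorem stmt_0_general
    {Ω : Type*} [MeasurableSpace Ω] (P : Measure Ω) [IsProbabilityMeasure P]
    (Y X : ℕ → Ω → ℝ)
    (hindep : iIndepFun (fun i ω => (Y i ω, X i ω)) P)
    (hident : ∀ i, IdentDistrib (fun ω => (Y i ω, X i ω)) (fun ω => (Y 0 ω, X 0 ω)) P P)
    (hpos : ∀ i, ∀ᵐ ω ∂P, 0 < X i ω)
    (hm2 : Integrable (fun ω => X 0 ω ^ 2) P)
    (n : ℕ → ℕ) (f : ℝ)
    (hfN : Tendsto (fun N : ℕ => (n N : ℝ) / N) atTop (𝓝 f)) :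
    ∀ᵐ ω ∂P,
      Tendsto (fun N : ℕ => (N : ℝ)⁻¹ * ∑ i ∈ Finset.range N,
          ((n N : ℝ) * X i ω / ∑ j ∈ Finset.range N, X j ω) *
            (1 - (n N : ℝ) * X i ω / ∑ j ∈ Finset.range N, X j ω)) atTop
        (𝓝 (f * (1 - (∫ ω, X 0 ω ^ 2 ∂P) / (∫ ω, X 0 ω ∂P) ^ 2) +
            f * (1 - f) * ((∫ ω, X 0 ω ^ 2 ∂P) / (∫ ω, X 0 ω ∂P) ^ 2))) := by
  have hint : Integrable (X 0) P :=
    .of_integrable_sq (hident 0).aemeasurable_fst.snd.aestronglyMeasurable hm2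
  have hmean : 0 < ∫ ω, X 0 ω ∂P := integral_pos_of_ae_pos (hpos 0) hint
  have hlln1 := strong_law_ae_real_comp hindep hident measurable_snd hint
  have hlln2 := strong_law_ae_real_comp hindep hident (measurable_snd.pow_const 2) hm2
  filter_upwards [hlln1, hlln2] with ω h1 h2
  rw [show ∀ r : ℝ, f * (1 - r) + f * (1 - f) * r = f - f ^ 2 * r from fun r => by ring]
  refine (hfN.sub ((hfN.pow 2).mul (h2.div (h1.pow 2) (pow_ne_zero 2 hmean.ne')))).congr' ?_
  filter_upwards [h1.eventually_ne hmean.ne'] with N hmeanN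
  obtain ⟨hS, hN⟩ := div_ne_zero_iff.1 hmeanN
  exact (inv_mul_sum_mul_one_sub_div_sum _ _ _ _ hN hS).symm

/-- Lemma 1 of the paper: almost-sure limit of `d_N / N = N⁻¹ ∑ᵢ πᵢ(1-πᵢ)`. -/
theorem stmt_0
    {Ω : Type*} [MeasurableSpace Ω] (P : Measure Ω) [IsProbabilityMeasure P]
    (Y X : ℕ → Ω → ℝ)
    (hmeas : ∀ i, Measurable fun ω => (Y i ω, X i ω))
    (hindep : iIndepFun (fun i ω => (Y i ω, X i ω)) P)
    (hident : ∀ i, IdentDistrib (fun ω => (Y i ω, X i ω)) (fun ω => (Y 0 ω, X 0 ω)) P P)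
    (hpos : ∀ i, ∀ᵐ ω ∂P, 0 < X i ω)
    (hm2 : Integrable (fun ω => X 0 ω ^ 2) P)
    (hminv : Integrable (fun ω => (X 0 ω)⁻¹) P)
    (n : ℕ → ℕ) (f : ℝ) (hf0 : 0 < f) (hf1 : f < 1)
    (hfN : Tendsto (fun N : ℕ => (n N : ℝ) / N) atTop (𝓝 f)) :
    ∀ᵐ ω ∂P,
      Tendsto (fun N : ℕ => (N : ℝ)⁻¹ * ∑ i ∈ Finset.range N,
          ((n N : ℝ) * X i ω / ∑ j ∈ Finset.range N, X j ω) *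
            (1 - (n N : ℝ) * X i ω / ∑ j ∈ Finset.range N, X j ω)) atTop
        (𝓝 (f * (1 - (∫ ω, X 0 ω ^ 2 ∂P) / (∫ ω, X 0 ω ∂P) ^ 2) +
            f * (1 - f) * ((∫ ω, X 0 ω ^ 2 ∂P) / (∫ ω, X 0 ω ∂P) ^ 2))) :=
  stmt_0_general P Y X hindep hident hpos hm2 n f hfN
end

section
/- For every fixed y ∈ ℝ, as N → ∞, N⁻¹ ∑_{i=1}^N π_i⁻¹ (1{Y_i ≤ y} − F_N(y)) converges ℙ-almost surely to (𝔼[X₁]/f)·(k₋₁(y) − 𝔼[X₁⁻¹]·F(y)), where k₋₁(y) = 𝔼[X₁⁻¹ 1{Y₁ ≤ y}]; equivalently, when F(y) > 0 the limit equals (𝔼[X₁]/f)(K₋₁(y) − 𝔼[X₁⁻¹])F(y) with K₋₁(y) = 𝔼[X₁⁻¹ | Y₁ ≤ y]. (Lemma 2, first statement.) -/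
open MeasureTheory ProbabilityTheory Filter Topology

/-!
Since `πᵢ⁻¹ = (X̄_N / f_N) Xᵢ⁻¹`, the statistic is the product
`(X̄_N / f_N) · (N⁻¹ ∑ Xᵢ⁻¹ 1{Yᵢ ≤ y} − F_N(y) · N⁻¹ ∑ Xᵢ⁻¹)` of empirical means of integrable
functions of the i.i.d. pairs `(Yᵢ, Xᵢ)`, so the strong law applied to each factor gives the limit.
-/

/-- Holds without side conditions: a vanishing `N`, `m`, `∑ x j` or `x i` kills the matching
terms on both sides through `0⁻¹ = 0`. -/
lemma inv_weighted_centered_mean_eq (N : ℕ) (m : ℝ) (x a : ℕ → ℝ) :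
    (N : ℝ)⁻¹ * ∑ i ∈ Finset.range N, (m * x i / ∑ j ∈ Finset.range N, x j)⁻¹ *
        (a i - (N : ℝ)⁻¹ * ∑ k ∈ Finset.range N, a k) =
      (∑ j ∈ Finset.range N, x j) / N * (m / N)⁻¹ *
        ((∑ i ∈ Finset.range N, (x i)⁻¹ * a i) / N -
          (∑ k ∈ Finset.range N, a k) / N * ((∑ i ∈ Finset.range N, (x i)⁻¹) / N)) := by
  rcases eq_or_ne (N : ℝ) 0 with hN | hN
  · simp [hN]
  set S := ∑ j ∈ Finset.range N, x j
  set A := ∑ k ∈ Finset.range N, a k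
  have hsum : ∑ i ∈ Finset.range N, (m * x i / S)⁻¹ * (a i - (N : ℝ)⁻¹ * A) =
      S * m⁻¹ * (∑ i ∈ Finset.range N, (x i)⁻¹ * a i -
        (N : ℝ)⁻¹ * A * ∑ i ∈ Finset.range N, (x i)⁻¹) := by
    simp only [mul_sub, Finset.mul_sum, ← Finset.sum_sub_distrib]
    refine Finset.sum_congr rfl fun i _ => ?_
    rw [div_eq_mul_inv, mul_inv, mul_inv, inv_inv]
    ring
  rw [hsum]
  field_simp

lemma integral_ite_le_eq_toReal {Ω : Type*} [MeasurableSpace Ω] {μ : Measure Ω} {Y : Ω → ℝ}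
    (hY : AEMeasurable Y μ) (y : ℝ) :
    ∫ ω, (if Y ω ≤ y then (1 : ℝ) else 0) ∂μ = (μ {ω | Y ω ≤ y}).toReal := by
  have hs : NullMeasurableSet {ω | Y ω ≤ y} μ := hY.nullMeasurable measurableSet_Iic
  have h := integral_indicator₀ (f := fun _ => (1 : ℝ)) hs
  simp only [Set.indicator_apply, Set.mem_ofPred_eq] at h
  rw [h, setIntegral_const, smul_eq_mul, mul_one, measureReal_def]

lemma integrable_of_integrable_sq {Ω : Type*} [MeasurableSpace Ω] {μ : Measure Ω}
    [IsFiniteMeasure μ] {X : Ω → ℝ} (hX : AEStronglyMeasurable X μ)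
    (h2 : Integrable (fun ω => X ω ^ 2) μ) : Integrable X μ :=
  ((memLp_two_iff_integrable_sq hX).2 h2).integrable one_le_two

lemma strong_law_ae_comp {Ω α : Type*} [MeasurableSpace Ω] [MeasurableSpace α] {μ : Measure Ω}
    {Z : ℕ → Ω → α} (hindep : iIndepFun Z μ) (hident : ∀ i, IdentDistrib (Z i) (Z 0) μ μ)
    {φ : α → ℝ} (hφ : Measurable φ) (hint : Integrable (fun ω => φ (Z 0 ω)) μ) :
    ∀ᵐ ω ∂μ, Tendsto (fun N : ℕ => (∑ i ∈ Finset.range N, φ (Z i ω)) / N) atTop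
      (𝓝 (∫ ω, φ (Z 0 ω) ∂μ)) :=
  strong_law_ae_real (fun i ω => φ (Z i ω)) hint
    (fun _ _ hij => (hindep.comp (fun _ => φ) (fun _ => hφ)).indepFun hij)
    (fun i => (hident i).comp hφ)

theorem stmt_2_general
    {Ω : Type*} [MeasurableSpace Ω] (P : Measure Ω) [IsProbabilityMeasure P]
    (Y X : ℕ → Ω → ℝ)
    (hindep : iIndepFun (fun i ω => (Y i ω, X i ω)) P)
    (hident : ∀ i, IdentDistrib (fun ω => (Y i ω, X i ω)) (fun ω => (Y 0 ω, X 0 ω)) P P)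
    (hm2 : Integrable (fun ω => X 0 ω ^ 2) P)
    (hminv : Integrable (fun ω => (X 0 ω)⁻¹) P)
    (n : ℕ → ℕ) (f : ℝ) (hf0 : 0 < f)
    (hfN : Tendsto (fun N : ℕ => (n N : ℝ) / N) atTop (𝓝 f)) :
    ∀ y : ℝ, ∀ᵐ ω ∂P,
      Tendsto (fun N : ℕ => (N : ℝ)⁻¹ * ∑ i ∈ Finset.range N,
          ((n N : ℝ) * X i ω / ∑ j ∈ Finset.range N, X j ω)⁻¹ *
            ((if Y i ω ≤ y then (1 : ℝ) else 0) -
              (N : ℝ)⁻¹ * ∑ k ∈ Finset.range N, if Y k ω ≤ y then (1 : ℝ) else 0)) atTop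
        (𝓝 ((∫ ω, X 0 ω ∂P) / f *
            ((∫ ω, (X 0 ω)⁻¹ * (if Y 0 ω ≤ y then (1 : ℝ) else 0) ∂P) -
              (∫ ω, (X 0 ω)⁻¹ ∂P) * (P {ω | Y 0 ω ≤ y}).toReal))) := by
  intro y
  have hZ0 := (hident 0).aemeasurable_snd
  have hY0 : AEMeasurable (Y 0) P := measurable_fst.comp_aemeasurable hZ0
  have hind_meas : Measurable fun p : ℝ × ℝ => if p.1 ≤ y then (1 : ℝ) else 0 :=
    Measurable.ite (measurableSet_le measurable_fst measurable_const) measurable_const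
      measurable_const
  have hint_ind : Integrable (fun ω => if Y 0 ω ≤ y then (1 : ℝ) else 0) P :=
    (integrable_const (1 : ℝ)).mono (hind_meas.comp_aemeasurable hZ0).aestronglyMeasurable
      (ae_of_all _ fun ω => by split_ifs <;> simp)
  have hint_inv_ind : Integrable (fun ω => (X 0 ω)⁻¹ * if Y 0 ω ≤ y then (1 : ℝ) else 0) P :=
    hminv.mul_bdd (c := 1) (hind_meas.comp_aemeasurable hZ0).aestronglyMeasurable
      (ae_of_all _ fun ω => by split_ifs <;> simp)
  have hint_X : Integrable (X 0) P :=
    integrable_of_integrable_sq (measurable_snd.comp_aemeasurable hZ0).aestronglyMeasurable hm2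
  filter_upwards [strong_law_ae_comp hindep hident measurable_snd hint_X,
    strong_law_ae_comp hindep hident (φ := fun p => p.2⁻¹) measurable_snd.inv hminv,
    strong_law_ae_comp hindep hident (φ := fun p => p.2⁻¹ * if p.1 ≤ y then 1 else 0)
      (measurable_snd.inv.mul hind_meas) hint_inv_ind,
    strong_law_ae_comp hindep hident hind_meas hint_ind] with ω hX hinv hinv_ind hind
  simp_rw [inv_weighted_centered_mean_eq]
  rw [← integral_ite_le_eq_toReal hY0]
  convert (hX.mul (hfN.inv₀ hf0.ne')).mul (hinv_ind.sub (hind.mul hinv)) using 2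
  ring

/-- Lemma 2, first statement: for every fixed `y`,
`N⁻¹ ∑ᵢ πᵢ⁻¹ (1{Yᵢ ≤ y} − F_N(y)) → (𝔼[X₁]/f)(k₋₁(y) − 𝔼[X₁⁻¹] F(y))` a.s. -/
theorem stmt_2
    {Ω : Type*} [MeasurableSpace Ω] (P : Measure Ω) [IsProbabilityMeasure P]
    (Y X : ℕ → Ω → ℝ)
    (hmeas : ∀ i, Measurable fun ω => (Y i ω, X i ω))
    (hindep : iIndepFun (fun i ω => (Y i ω, X i ω)) P)
    (hident : ∀ i, IdentDistrib (fun ω => (Y i ω, X i ω)) (fun ω => (Y 0 ω, X 0 ω)) P P)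
    (hpos : ∀ i, ∀ᵐ ω ∂P, 0 < X i ω)
    (hm2 : Integrable (fun ω => X 0 ω ^ 2) P)
    (hminv : Integrable (fun ω => (X 0 ω)⁻¹) P)
    (n : ℕ → ℕ) (f : ℝ) (hf0 : 0 < f) (hf1 : f < 1)
    (hfN : Tendsto (fun N : ℕ => (n N : ℝ) / N) atTop (𝓝 f)) :
    ∀ y : ℝ, ∀ᵐ ω ∂P,
      Tendsto (fun N : ℕ => (N : ℝ)⁻¹ * ∑ i ∈ Finset.range N,
          ((n N : ℝ) * X i ω / ∑ j ∈ Finset.range N, X j ω)⁻¹ *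
            ((if Y i ω ≤ y then (1 : ℝ) else 0) -
              (N : ℝ)⁻¹ * ∑ k ∈ Finset.range N, if Y k ω ≤ y then (1 : ℝ) else 0)) atTop
        (𝓝 ((∫ ω, X 0 ω ∂P) / f *
            ((∫ ω, (X 0 ω)⁻¹ * (if Y 0 ω ≤ y then (1 : ℝ) else 0) ∂P) -
              (∫ ω, (X 0 ω)⁻¹ ∂P) * (P {ω | Y 0 ω ≤ y}).toReal))) :=
  stmt_2_general P Y X hindep hident hm2 hminv n f hf0 hfN
end

section
/- Fix y ∈ ℝ and assume the almost-sure limit σ²(y) of S_N²(y)/N is strictly positive. For ε > 0 let A_N(ε) = { i ∈ {1,…,N} : |Z_{i,N}(y)| > ε π_i S_N(y) } and L_N(ε)² = ∑_{i ∈ A_N(ε)} (π_i⁻¹ − 1) Z_{i,N}(y)². Then for every ε > 0, L_N(ε)²/S_N²(y) → 0 as N → ∞, ℙ-almost surely. (Lemma 5: the Lindeberg-type condition for the Hájek CLT.) -/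
open MeasureTheory ProbabilityTheory Filter Topology

/-- First-order inclusion probability `πᵢ = n_N Xᵢ / ∑_{j<N} Xⱼ`. -/
noncomputable def incl {Ω : Type*} (X : ℕ → Ω → ℝ) (n : ℕ → ℕ) (N i : ℕ) (ω : Ω) : ℝ :=
  (n N : ℝ) * X i ω / ∑ j ∈ Finset.range N, X j ω

/-- Indicator `1{Yᵢ ≤ y}`. -/
noncomputable def indLE {Ω : Type*} (Y : ℕ → Ω → ℝ) (y : ℝ) (i : ℕ) (ω : Ω) : ℝ :=
  if Y i ω ≤ y then 1 else 0

/-- Population distribution function `F_N(y) = N⁻¹ ∑_{i<N} 1{Yᵢ ≤ y}`. -/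
noncomputable def empDF {Ω : Type*} (Y : ℕ → Ω → ℝ) (y : ℝ) (N : ℕ) (ω : Ω) : ℝ :=
  (N : ℝ)⁻¹ * ∑ i ∈ Finset.range N, indLE Y y i ω

/-- The quantity `Z_{i,N}(y)` of Lemma 3 of the paper. -/
noncomputable def Zin {Ω : Type*} (Y X : ℕ → Ω → ℝ) (n : ℕ → ℕ) (y : ℝ) (i N : ℕ)
    (ω : Ω) : ℝ :=
  (indLE Y y i ω - empDF Y y N ω) -
    incl X n N i ω *
      (∑ j ∈ Finset.range N, (1 - incl X n N j ω) * (indLE Y y j ω - empDF Y y N ω)) /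
      (∑ j ∈ Finset.range N, incl X n N j ω * (1 - incl X n N j ω))

/-- The quantity `S_N²(y) = ∑_{i<N} (πᵢ⁻¹ − 1) Z_{i,N}(y)²` of Lemma 3 of the paper. -/
noncomputable def SN2 {Ω : Type*} (Y X : ℕ → Ω → ℝ) (n : ℕ → ℕ) (y : ℝ) (N : ℕ)
    (ω : Ω) : ℝ :=
  ∑ i ∈ Finset.range N, ((incl X n N i ω)⁻¹ - 1) * (Zin Y X n y i N ω) ^ 2

/-- The Lindeberg-type quantity `L_N(ε)² = ∑_{i ∈ A_N(ε)} (πᵢ⁻¹ − 1) Z_{i,N}(y)²`, where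
`A_N(ε) = {i < N : |Z_{i,N}(y)| > ε πᵢ S_N(y)}`. -/
noncomputable def LN2 {Ω : Type*} (Y X : ℕ → Ω → ℝ) (n : ℕ → ℕ) (y ε : ℝ) (N : ℕ)
    (ω : Ω) : ℝ :=
  ∑ i ∈ (Finset.range N).filter
      (fun i => ε * incl X n N i ω * Real.sqrt (SN2 Y X n y N ω) < |Zin Y X n y i N ω|),
    ((incl X n N i ω)⁻¹ - 1) * (Zin Y X n y i N ω) ^ 2

/-!
By the strong law of large numbers, almost surely every empirical moment entering `S_N²(y)`
converges, so `S_N²(y) / N → σ²(y) > 0` and the regression coefficient inside `Z_{i,N}(y)`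
converges. Hence `|Z_{i,N}(y)| ≤ 1 + C πᵢ`, so an index of `A_N(ε)` has
`πᵢ ≲ 1 / S_N(y)`, i.e. `Xᵢ⁻¹` lies above a level growing like `√N`, and its summand is at most
`4 πᵢ⁻¹`. Thus `L_N(ε)² / N` is bounded by a Cesàro mean of the upper tails of `Xᵢ⁻¹` beyond a
level tending to infinity, which vanishes because `𝔼[X₁⁻¹] < ∞`.
-/

open Finset

noncomputable def sampleMean (a : ℕ → ℝ) (N : ℕ) : ℝ :=
  (∑ i ∈ range N, a i) / N

lemma sampleMean_nonneg {a : ℕ → ℝ} (ha : ∀ i, 0 ≤ a i) (N : ℕ) : 0 ≤ sampleMean a N :=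
  div_nonneg (sum_nonneg fun i _ => ha i) N.cast_nonneg

noncomputable def upperTail (b a : ℝ) : ℝ := if b < a then a else 0

lemma upperTail_nonneg {a : ℝ} (ha : 0 ≤ a) (b : ℝ) : 0 ≤ upperTail b a := by
  unfold upperTail; split_ifs <;> simp [ha]

lemma upperTail_anti {a b c : ℝ} (ha : 0 ≤ a) (hbc : b ≤ c) : upperTail c a ≤ upperTail b a := by
  unfold upperTail; split_ifs <;> first | exact le_rfl | exact ha | linarith

lemma abs_upperTail_le (b a : ℝ) : |upperTail b a| ≤ |a| := by
  unfold upperTail; split_ifs <;> simp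

lemma measurable_upperTail (b : ℝ) : Measurable (upperTail b) :=
  measurable_id.ite measurableSet_Ioi measurable_const

lemma tendsto_sampleMean_upperTail_of_tendsto_atTop {a : ℕ → ℝ} (ha : ∀ i, 0 ≤ a i)
    {t : ℕ → ℝ} (htail : ∀ M : ℕ, Tendsto (sampleMean fun i => upperTail M (a i)) atTop
      (𝓝 (t M)))
    (ht : Tendsto t atTop (𝓝 0)) {b : ℕ → ℝ} (hb : Tendsto b atTop atTop) :
    Tendsto (fun N => sampleMean (fun i => upperTail (b N) (a i)) N) atTop (𝓝 0) := by
  refine tendsto_order.2 ⟨fun c hc => Eventually.of_forall fun N =>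
    hc.trans_le (sampleMean_nonneg (fun i => upperTail_nonneg (ha i) _) N), fun η hη => ?_⟩
  obtain ⟨M, hM⟩ := (ht.eventually (gt_mem_nhds hη)).exists
  filter_upwards [hb.eventually_ge_atTop M, (htail M).eventually (gt_mem_nhds hM)]
    with N hbN hN
  exact lt_of_le_of_lt (div_le_div_of_nonneg_right
    (sum_le_sum fun i _ => upperTail_anti (ha i) hbN) N.cast_nonneg) hN

lemma lindeberg_term_bound {π Z C ε S : ℝ} (hπ : 0 < π) (hZ : |Z| ≤ 1 + π * C)
    (hS : 2 * C + 2 ≤ ε * S) (h : ε * π * S < |Z|) :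
    ε * S / 2 < π⁻¹ ∧ 0 ≤ (π⁻¹ - 1) * Z ^ 2 ∧ (π⁻¹ - 1) * Z ^ 2 ≤ 4 * π⁻¹ := by
  have hπC : π * C + 2 * π < 1 := by nlinarith
  have hZ2 : |Z| < 2 - 2 * π := by linarith
  have hπ1 : π < 1 := by linarith [abs_nonneg Z]
  have hsq : Z ^ 2 ≤ 4 := by nlinarith [sq_abs Z, abs_nonneg Z]
  have hinv : 1 ≤ π⁻¹ := one_le_inv_iff₀.2 ⟨hπ, hπ1.le⟩
  refine ⟨?_, mul_nonneg (by linarith) (sq_nonneg Z), by nlinarith [sq_nonneg Z]⟩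
  rw [← one_div, lt_div_iff₀' hπ]
  linarith

lemma lindeberg_sum_bound {ι : Type*} (s : Finset ι) (π x Z : ι → ℝ) {κ C ε S : ℝ}
    (hκ : 0 < κ) (hx : ∀ i ∈ s, 0 < x i) (hπ : ∀ i ∈ s, π i = κ * x i)
    (hZ : ∀ i ∈ s, |Z i| ≤ 1 + π i * C) (hS : 2 * C + 2 ≤ ε * S) :
    0 ≤ ∑ i ∈ s.filter (fun i => ε * π i * S < |Z i|), ((π i)⁻¹ - 1) * Z i ^ 2 ∧
      ∑ i ∈ s.filter (fun i => ε * π i * S < |Z i|), ((π i)⁻¹ - 1) * Z i ^ 2 ≤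
        4 / κ * ∑ i ∈ s, upperTail (κ * (ε * S / 2)) (x i)⁻¹ := by
  have hbound : ∀ i ∈ s.filter (fun i => ε * π i * S < |Z i|),
      ε * S / 2 < (π i)⁻¹ ∧ 0 ≤ ((π i)⁻¹ - 1) * Z i ^ 2 ∧
        ((π i)⁻¹ - 1) * Z i ^ 2 ≤ 4 * (π i)⁻¹ := fun i hi => by
    obtain ⟨his, hi⟩ := mem_filter.1 hi
    exact lindeberg_term_bound (hπ i his ▸ mul_pos hκ (hx i his)) (hZ i his) hS hi
  refine ⟨sum_nonneg fun i hi => (hbound i hi).2.1, ?_⟩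
  rw [mul_sum]
  refine (sum_le_sum fun i hi => (hbound i hi).2.2).trans
    ((sum_le_sum fun i hi => ?_).trans (sum_le_sum_of_subset_of_nonneg (filter_subset _ s)
      fun i his _ => mul_nonneg (by positivity) (upperTail_nonneg (inv_pos.2 (hx i his)).le _)))
  have hinv : (π i)⁻¹ = κ⁻¹ * (x i)⁻¹ := by rw [hπ i (mem_filter.1 hi).1, mul_inv]
  have hlt : κ * (ε * S / 2) < (x i)⁻¹ := by
    simpa only [hinv, lt_inv_mul_iff₀ hκ] using (hbound i hi).1
  rw [upperTail, if_pos hlt, hinv, div_eq_mul_inv, mul_assoc]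

/-- The coefficient of `π i` subtracted from `D i` is the least-squares coefficient of `D` on `π`
for the weights `(π i)⁻¹ - 1`: this is the residual-sum-of-squares identity. -/
lemma sum_inv_sub_one_mul_sq_sub_regression {ι : Type*} (s : Finset ι) (π D : ι → ℝ)
    (hπ : ∀ i ∈ s, π i ≠ 0) :
    ∑ i ∈ s, ((π i)⁻¹ - 1) *
        (D i - π i * (∑ j ∈ s, (1 - π j) * D j) / ∑ j ∈ s, π j * (1 - π j)) ^ 2 =
      ∑ i ∈ s, ((π i)⁻¹ - 1) * D i ^ 2 -
        (∑ j ∈ s, (1 - π j) * D j) ^ 2 / ∑ j ∈ s, π j * (1 - π j) := by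
  set B := ∑ j ∈ s, (1 - π j) * D j
  set A := ∑ j ∈ s, π j * (1 - π j)
  have hterm : ∀ i ∈ s, ((π i)⁻¹ - 1) * (D i - π i * B / A) ^ 2 =
      ((π i)⁻¹ - 1) * D i ^ 2 - 2 * (B / A) * ((1 - π i) * D i) +
        (B / A) ^ 2 * (π i * (1 - π i)) := fun i hi => by
    field_simp [hπ i hi]
    ring
  rw [sum_congr rfl hterm, sum_add_distrib, sum_sub_distrib, ← mul_sum, ← mul_sum]
  rcases eq_or_ne A 0 with hA | hA
  · simp [hA]
  · field_simp
    ring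

noncomputable def regCoef {Ω : Type*} (Y X : ℕ → Ω → ℝ) (n : ℕ → ℕ) (y : ℝ) (N : ℕ) (ω : Ω) :
    ℝ :=
  (∑ j ∈ range N, (1 - incl X n N j ω) * (indLE Y y j ω - empDF Y y N ω)) /
    ∑ j ∈ range N, incl X n N j ω * (1 - incl X n N j ω)

section Hajek

variable {Ω : Type*} (Y X : ℕ → Ω → ℝ) (n : ℕ → ℕ) (y : ℝ) (ω : Ω)

lemma indLE_sq (i : ℕ) : indLE Y y i ω ^ 2 = indLE Y y i ω := by
  unfold indLE; split_ifs <;> norm_num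

lemma indLE_eq_indicator (i : ℕ) : indLE Y y i = {ω | Y i ω ≤ y}.indicator 1 := by
  ext ω
  simp [indLE, Set.indicator_apply]

lemma indLE_nonneg (i : ℕ) : 0 ≤ indLE Y y i ω := by
  unfold indLE; split_ifs <;> norm_num

lemma indLE_le_one (i : ℕ) : indLE Y y i ω ≤ 1 := by
  unfold indLE; split_ifs <;> norm_num

lemma empDF_eq_sampleMean (N : ℕ) : empDF Y y N ω = sampleMean (indLE Y y · ω) N :=
  inv_mul_eq_div _ _

lemma empDF_nonneg (N : ℕ) : 0 ≤ empDF Y y N ω := by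
  rw [empDF_eq_sampleMean]; exact sampleMean_nonneg (indLE_nonneg Y y ω) N

lemma empDF_le_one (N : ℕ) : empDF Y y N ω ≤ 1 := by
  rw [empDF_eq_sampleMean, sampleMean]
  refine div_le_one_of_le₀ ?_ N.cast_nonneg
  simpa using sum_le_sum fun i (_ : i ∈ range N) => indLE_le_one Y y ω i

lemma sum_indLE_sub_empDF {N : ℕ} (hN : N ≠ 0) :
    ∑ i ∈ range N, (indLE Y y i ω - empDF Y y N ω) = 0 := by
  rw [sum_sub_distrib, sum_const, card_range, nsmul_eq_mul, empDF]
  field_simp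
  ring

lemma sum_mul_indLE_sub_sq (w : ℕ → ℝ) (N : ℕ) (c : ℝ) :
    ∑ i ∈ range N, w i * (indLE Y y i ω - c) ^ 2 =
      (1 - 2 * c) * ∑ i ∈ range N, w i * indLE Y y i ω + c ^ 2 * ∑ i ∈ range N, w i := by
  rw [mul_sum, mul_sum, ← sum_add_distrib]
  refine sum_congr rfl fun i _ => ?_
  linear_combination w i * indLE_sq Y y ω i

lemma incl_eq_mul (N i : ℕ) :
    incl X n N i ω = (n N : ℝ) / (∑ j ∈ range N, X j ω) * X i ω :=
  (div_mul_eq_mul_div _ _ _).symm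

lemma sum_range_pos {N : ℕ} (hN : N ≠ 0) (hx : ∀ i, 0 < X i ω) :
    0 < ∑ j ∈ range N, X j ω :=
  sum_pos (fun i _ => hx i) (nonempty_range_iff.2 hN)

lemma sum_incl_mul_one_sub_incl_div {N : ℕ} (hN : N ≠ 0) (hx : ∀ i, 0 < X i ω) :
    (∑ i ∈ range N, incl X n N i ω * (1 - incl X n N i ω)) / N =
      n N / N - (n N / N : ℝ) ^ 2 * sampleMean (fun i => X i ω ^ 2) N /
        sampleMean (X · ω) N ^ 2 := by
  have hs := (sum_range_pos X ω hN hx).ne'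
  have hsum : ∑ i ∈ range N, incl X n N i ω * (1 - incl X n N i ω) =
      (n N / ∑ j ∈ range N, X j ω) * ∑ i ∈ range N, X i ω -
        (n N / ∑ j ∈ range N, X j ω) ^ 2 * ∑ i ∈ range N, X i ω ^ 2 := by
    simp only [incl_eq_mul, mul_sum, ← sum_sub_distrib]
    exact sum_congr rfl fun i _ => by ring
  rw [hsum, sampleMean, sampleMean]
  field_simp

lemma sum_one_sub_incl_mul_div {N : ℕ} (hN : N ≠ 0) (hx : ∀ i, 0 < X i ω) :
    (∑ i ∈ range N, (1 - incl X n N i ω) * (indLE Y y i ω - empDF Y y N ω)) / N =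
      n N / N * (empDF Y y N ω -
        sampleMean (fun i => X i ω * indLE Y y i ω) N / sampleMean (X · ω) N) := by
  have hs := (sum_range_pos X ω hN hx).ne'
  have hsum : ∑ i ∈ range N, (1 - incl X n N i ω) * (indLE Y y i ω - empDF Y y N ω) =
      ∑ i ∈ range N, (indLE Y y i ω - empDF Y y N ω) - (n N / ∑ j ∈ range N, X j ω) *
        (∑ i ∈ range N, X i ω * indLE Y y i ω - empDF Y y N ω * ∑ i ∈ range N, X i ω) := by
    simp only [incl_eq_mul, mul_sum, ← sum_sub_distrib]
    exact sum_congr rfl fun i _ => by ring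
  rw [hsum, sum_indLE_sub_empDF Y y ω hN, sampleMean, sampleMean]
  field_simp
  ring

lemma sum_inv_incl_sub_one_mul_sq_div {N : ℕ} (hN : N ≠ 0) :
    (∑ i ∈ range N, ((incl X n N i ω)⁻¹ - 1) * (indLE Y y i ω - empDF Y y N ω) ^ 2) / N =
      sampleMean (X · ω) N / (n N / N) *
          ((1 - 2 * empDF Y y N ω) * sampleMean (fun i => (X i ω)⁻¹ * indLE Y y i ω) N +
            empDF Y y N ω ^ 2 * sampleMean (fun i => (X i ω)⁻¹) N) -
        ((1 - 2 * empDF Y y N ω) * empDF Y y N ω + empDF Y y N ω ^ 2) := by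
  have hinv : ∀ i, (incl X n N i ω)⁻¹ - 1 =
      (∑ j ∈ range N, X j ω) / n N * (X i ω)⁻¹ - 1 := fun i => by
    rw [incl_eq_mul, mul_inv, inv_div]
  have hsum : ∑ i ∈ range N, ((incl X n N i ω)⁻¹ - 1) * (indLE Y y i ω - empDF Y y N ω) ^ 2 =
      (∑ j ∈ range N, X j ω) / n N *
          ∑ i ∈ range N, (X i ω)⁻¹ * (indLE Y y i ω - empDF Y y N ω) ^ 2 -
        ∑ i ∈ range N, 1 * (indLE Y y i ω - empDF Y y N ω) ^ 2 := by
    rw [mul_sum, ← sum_sub_distrib]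
    exact sum_congr rfl fun i _ => by rw [hinv]; ring
  rw [hsum, sum_mul_indLE_sub_sq, sum_mul_indLE_sub_sq]
  simp only [sampleMean, empDF_eq_sampleMean, one_mul, sum_const, card_range, nsmul_eq_mul,
    mul_one]
  field_simp

lemma abs_Zin_le {i N : ℕ} (hπ : 0 ≤ incl X n N i ω) :
    |Zin Y X n y i N ω| ≤ 1 + incl X n N i ω * |regCoef Y X n y N ω| := by
  have hD : |indLE Y y i ω - empDF Y y N ω| ≤ 1 := abs_sub_le_iff.2
    ⟨by linarith [indLE_le_one Y y ω i, empDF_nonneg Y y ω N],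
      by linarith [indLE_nonneg Y y ω i, empDF_le_one Y y ω N]⟩
  calc |Zin Y X n y i N ω|
      ≤ |indLE Y y i ω - empDF Y y N ω| + |incl X n N i ω * regCoef Y X n y N ω| := by
        rw [Zin, mul_div_assoc]; exact abs_sub _ _
    _ ≤ 1 + incl X n N i ω * |regCoef Y X n y N ω| := by
        rw [abs_mul, abs_of_nonneg hπ]; linarith

lemma SN2_eq {N : ℕ} (hn : n N ≠ 0) (hx : ∀ i, 0 < X i ω) :
    SN2 Y X n y N ω =
      ∑ i ∈ range N, ((incl X n N i ω)⁻¹ - 1) * (indLE Y y i ω - empDF Y y N ω) ^ 2 -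
        (∑ j ∈ range N, (1 - incl X n N j ω) * (indLE Y y j ω - empDF Y y N ω)) ^ 2 /
          ∑ j ∈ range N, incl X n N j ω * (1 - incl X n N j ω) := by
  refine sum_inv_sub_one_mul_sq_sub_regression _ _ _ fun i hi => ?_
  have hN : N ≠ 0 := by rintro rfl; simp at hi
  rw [incl_eq_mul]
  exact mul_ne_zero (div_ne_zero (by exact_mod_cast hn) (sum_range_pos X ω hN hx).ne')
    (hx i).ne'

end Hajek

section HajekLimits

variable {Ω : Type*} {Y X : ℕ → Ω → ℝ} {n : ℕ → ℕ} {y : ℝ} {ω : Ω}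

lemma tendsto_sum_incl_mul_one_sub_incl_div (hx : ∀ i, 0 < X i ω) {f μ μ₂ : ℝ} (hμ : μ ≠ 0)
    (hn : Tendsto (fun N : ℕ => (n N : ℝ) / N) atTop (𝓝 f))
    (hX : Tendsto (sampleMean (X · ω)) atTop (𝓝 μ))
    (hX2 : Tendsto (sampleMean fun i => X i ω ^ 2) atTop (𝓝 μ₂)) :
    Tendsto (fun N : ℕ => (∑ i ∈ range N, incl X n N i ω * (1 - incl X n N i ω)) / N) atTop
      (𝓝 (f - f ^ 2 * μ₂ / μ ^ 2)) :=
  (hn.sub (((hn.pow 2).mul hX2).div (hX.pow 2) (pow_ne_zero 2 hμ))).congr'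
    ((eventually_ne_atTop 0).mono fun _ hN => (sum_incl_mul_one_sub_incl_div X n ω hN hx).symm)

lemma tendsto_sum_one_sub_incl_mul_div (hx : ∀ i, 0 < X i ω) {f μ F k₁ : ℝ} (hμ : μ ≠ 0)
    (hn : Tendsto (fun N : ℕ => (n N : ℝ) / N) atTop (𝓝 f))
    (hX : Tendsto (sampleMean (X · ω)) atTop (𝓝 μ))
    (hF : Tendsto (empDF Y y · ω) atTop (𝓝 F))
    (hk : Tendsto (sampleMean fun i => X i ω * indLE Y y i ω) atTop (𝓝 k₁)) :
    Tendsto (fun N : ℕ =>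
        (∑ i ∈ range N, (1 - incl X n N i ω) * (indLE Y y i ω - empDF Y y N ω)) / N) atTop
      (𝓝 (f * (F - k₁ / μ))) :=
  (hn.mul (hF.sub (hk.div hX hμ))).congr'
    ((eventually_ne_atTop 0).mono fun _ hN => (sum_one_sub_incl_mul_div Y X n y ω hN hx).symm)

lemma tendsto_sum_inv_incl_sub_one_mul_sq_div {f μ μInv F kInv : ℝ} (hf : f ≠ 0)
    (hn : Tendsto (fun N : ℕ => (n N : ℝ) / N) atTop (𝓝 f))
    (hX : Tendsto (sampleMean (X · ω)) atTop (𝓝 μ))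
    (hXinv : Tendsto (sampleMean fun i => (X i ω)⁻¹) atTop (𝓝 μInv))
    (hF : Tendsto (empDF Y y · ω) atTop (𝓝 F))
    (hkinv : Tendsto (sampleMean fun i => (X i ω)⁻¹ * indLE Y y i ω) atTop (𝓝 kInv)) :
    Tendsto (fun N : ℕ =>
        (∑ i ∈ range N, ((incl X n N i ω)⁻¹ - 1) * (indLE Y y i ω - empDF Y y N ω) ^ 2) / (N : ℝ))
      atTop (𝓝 (μ / f * ((1 - 2 * F) * kInv + F ^ 2 * μInv) - ((1 - 2 * F) * F + F ^ 2))) := by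
  have hc := tendsto_const_nhds (x := (1 : ℝ)).sub (hF.const_mul 2)
  exact ((hX.div hn hf).mul ((hc.mul hkinv).add ((hF.pow 2).mul hXinv))).sub
    ((hc.mul hF).add (hF.pow 2)) |>.congr' ((eventually_ne_atTop 0).mono fun _ hN =>
      (sum_inv_incl_sub_one_mul_sq_div Y X n y ω hN).symm)

lemma tendsto_regCoef {a b : ℝ} (ha : a ≠ 0)
    (hA : Tendsto (fun N : ℕ => (∑ i ∈ range N, incl X n N i ω * (1 - incl X n N i ω)) / N)
      atTop (𝓝 a))
    (hB : Tendsto (fun N : ℕ =>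
        (∑ i ∈ range N, (1 - incl X n N i ω) * (indLE Y y i ω - empDF Y y N ω)) / N) atTop
      (𝓝 b)) :
    Tendsto (regCoef Y X n y · ω) atTop (𝓝 (b / a)) :=
  (hB.div hA ha).congr' ((eventually_ne_atTop 0).mono fun _ hN =>
    div_div_div_cancel_right₀ (Nat.cast_ne_zero.2 hN) _ _)

lemma tendsto_SN2_div (hx : ∀ i, 0 < X i ω) {f a b q : ℝ} (hf : f ≠ 0) (ha : a ≠ 0)
    (hn : Tendsto (fun N : ℕ => (n N : ℝ) / N) atTop (𝓝 f))
    (hA : Tendsto (fun N : ℕ => (∑ i ∈ range N, incl X n N i ω * (1 - incl X n N i ω)) / N)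
      atTop (𝓝 a))
    (hB : Tendsto (fun N : ℕ =>
        (∑ i ∈ range N, (1 - incl X n N i ω) * (indLE Y y i ω - empDF Y y N ω)) / N) atTop
      (𝓝 b))
    (hQ : Tendsto (fun N : ℕ =>
        (∑ i ∈ range N, ((incl X n N i ω)⁻¹ - 1) * (indLE Y y i ω - empDF Y y N ω) ^ 2) / (N : ℝ))
      atTop (𝓝 q)) :
    Tendsto (fun N : ℕ => SN2 Y X n y N ω / N) atTop (𝓝 (q - b ^ 2 / a)) := by
  refine (hQ.sub ((hB.pow 2).div hA ha)).congr' ?_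
  filter_upwards [eventually_ne_atTop 0, hn.eventually_ne hf] with N hN hnN
  have hn0 : n N ≠ 0 := by rintro h; simp [h] at hnN
  simp only [Pi.div_apply]
  rw [SN2_eq Y X n y ω hn0 hx]
  field_simp

lemma tendsto_LN2_div_SN2_of_tendsto_SN2_div (hx : ∀ i, 0 < X i ω) {ε σ2 ρ c : ℝ}
    {t : ℕ → ℝ} (hε : 0 < ε) (hσ : 0 < σ2) (hc : 0 < c)
    (hS : Tendsto (fun N : ℕ => SN2 Y X n y N ω / N) atTop (𝓝 σ2))
    (hr : Tendsto (regCoef Y X n y · ω) atTop (𝓝 ρ))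
    (hκ : Tendsto (fun N => (n N : ℝ) / ∑ j ∈ range N, X j ω) atTop (𝓝 c))
    (htail : ∀ M : ℕ, Tendsto (sampleMean fun i => upperTail M (X i ω)⁻¹) atTop (𝓝 (t M)))
    (ht : Tendsto t atTop (𝓝 0)) :
    Tendsto (fun N => LN2 Y X n y ε N ω / SN2 Y X n y N ω) atTop (𝓝 0) := by
  set κ := fun N => (n N : ℝ) / ∑ j ∈ range N, X j ω
  set S := fun N => √(SN2 Y X n y N ω)
  have hSN2 : Tendsto (SN2 Y X n y · ω) atTop atTop := Tendsto.num tendsto_natCast_atTop_atTop hσ hS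
  have hSqrt : Tendsto S atTop atTop := Real.tendsto_sqrt_atTop.comp hSN2
  have hb : Tendsto (fun N => κ N * (ε * S N / 2)) atTop atTop :=
    hκ.pos_mul_atTop hc ((hSqrt.const_mul_atTop hε).atTop_div_const two_pos)
  have hbound : Tendsto (fun N => 4 / κ N * sampleMean (fun i => upperTail (κ N * (ε * S N / 2))
      (X i ω)⁻¹) N / (SN2 Y X n y N ω / N)) atTop (𝓝 (4 / c * 0 / σ2)) :=
    ((tendsto_const_nhds.div hκ hc.ne').mul (tendsto_sampleMean_upperTail_of_tendsto_atTop
      (fun i => (inv_pos.2 (hx i)).le) htail ht hb)).div hS hσ.ne'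
  rw [mul_zero, zero_div] at hbound
  have hκpos : ∀ᶠ N in atTop, 0 < κ N := hκ.eventually (lt_mem_nhds hc)
  have hmargin : ∀ᶠ N in atTop, 2 * |regCoef Y X n y N ω| + 2 ≤ ε * S N := by
    filter_upwards [hr.abs.eventually_le_const (lt_add_one |ρ|),
      (hSqrt.const_mul_atTop hε).eventually_ge_atTop (2 * (|ρ| + 1) + 2)] with N h1 h2
    linarith
  have hLN2 : ∀ᶠ N in atTop, 0 ≤ LN2 Y X n y ε N ω ∧ LN2 Y X n y ε N ω ≤
      4 / κ N * ∑ i ∈ range N, upperTail (κ N * (ε * S N / 2)) (X i ω)⁻¹ := by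
    filter_upwards [hκpos, hmargin] with N hκN hmN
    have hincl : ∀ i, incl X n N i ω = κ N * X i ω := incl_eq_mul X n ω N
    exact lindeberg_sum_bound (range N) (incl X n N · ω) (X · ω) (Zin Y X n y · N ω) hκN
      (fun i _ => hx i) (fun i _ => hincl i)
      (fun i _ => abs_Zin_le Y X n y ω ((hincl i).symm ▸ (mul_pos hκN (hx i)).le)) hmN
  refine tendsto_of_tendsto_of_tendsto_of_le_of_le' tendsto_const_nhds hbound ?_ ?_ <;>
    filter_upwards [hLN2, hSN2.eventually_gt_atTop 0, eventually_ne_atTop 0]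
      with N ⟨hL0, hL⟩ hSpos hN
  · exact div_nonneg hL0 hSpos.le
  · rw [sampleMean, mul_div_assoc', div_div_div_cancel_right₀ (Nat.cast_ne_zero.2 hN)]
    exact div_le_div_of_nonneg_right hL hSpos.le

lemma tendsto_LN2_div_SN2 (hx : ∀ i, 0 < X i ω) {ε f μ μ₂ μInv F kInv k₁ d : ℝ}
    {t : ℕ → ℝ} (hε : 0 < ε) (hf : 0 < f) (hμ : 0 < μ)
    (hn : Tendsto (fun N : ℕ => (n N : ℝ) / N) atTop (𝓝 f))
    (hX : Tendsto (sampleMean (X · ω)) atTop (𝓝 μ))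
    (hX2 : Tendsto (sampleMean fun i => X i ω ^ 2) atTop (𝓝 μ₂))
    (hXinv : Tendsto (sampleMean fun i => (X i ω)⁻¹) atTop (𝓝 μInv))
    (hU : Tendsto (sampleMean (indLE Y y · ω)) atTop (𝓝 F))
    (hkinv : Tendsto (sampleMean fun i => (X i ω)⁻¹ * indLE Y y i ω) atTop (𝓝 kInv))
    (hk : Tendsto (sampleMean fun i => X i ω * indLE Y y i ω) atTop (𝓝 k₁))
    (htail : ∀ M : ℕ, Tendsto (sampleMean fun i => upperTail M (X i ω)⁻¹) atTop (𝓝 (t M)))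
    (ht : Tendsto t atTop (𝓝 0))
    (hd : d = f * (1 - μ₂ / μ ^ 2) + f * (1 - f) * (μ₂ / μ ^ 2)) (hd0 : d ≠ 0)
    (hσ : 0 < (μ / f * kInv - F) * (1 - F) - μ / f * (kInv - μInv * F) * F -
      f ^ 2 / d * (F - k₁ / μ) ^ 2) :
    Tendsto (fun N => LN2 Y X n y ε N ω / SN2 Y X n y N ω) atTop (𝓝 0) := by
  have hd' : d = f - f ^ 2 * μ₂ / μ ^ 2 := by rw [hd]; ring
  subst hd'
  have hA := tendsto_sum_incl_mul_one_sub_incl_div hx hμ.ne' hn hX hX2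
  have hF : Tendsto (empDF Y y · ω) atTop (𝓝 F) :=
    hU.congr fun N => (empDF_eq_sampleMean Y y ω N).symm
  have hB := tendsto_sum_one_sub_incl_mul_div hx hμ.ne' hn hX hF hk
  have hQ := tendsto_sum_inv_incl_sub_one_mul_sq_div hf.ne' hn hX hXinv hF hkinv
  have hσ' : 0 < μ / f * ((1 - 2 * F) * kInv + F ^ 2 * μInv) - ((1 - 2 * F) * F + F ^ 2) -
      (f * (F - k₁ / μ)) ^ 2 / (f - f ^ 2 * μ₂ / μ ^ 2) := by
    convert hσ using 1; ring
  have hκ : Tendsto (fun N => (n N : ℝ) / ∑ j ∈ range N, X j ω) atTop (𝓝 (f / μ)) :=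
    (hn.div hX hμ.ne').congr' ((eventually_ne_atTop 0).mono fun _ hN =>
      div_div_div_cancel_right₀ (Nat.cast_ne_zero.2 hN) _ _)
  exact tendsto_LN2_div_SN2_of_tendsto_SN2_div hx hε hσ' (div_pos hf hμ)
    (tendsto_SN2_div hx hf.ne' hd0 hn hA hB hQ) (tendsto_regCoef hd0 hA hB) hκ htail ht

end HajekLimits

section Probability

variable {Ω : Type*} [MeasurableSpace Ω] {P : Measure Ω}

lemma integral_pos_of_ae_pos_s7 [NeZero P] {g : Ω → ℝ} (hg : Integrable g P)
    (hpos : ∀ᵐ ω ∂P, 0 < g ω) : 0 < ∫ ω, g ω ∂P := by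
  rw [integral_pos_iff_support_of_nonneg_ae (hpos.mono fun _ h => h.le) hg]
  refine pos_iff_ne_zero.2 fun h0 => ?_
  obtain ⟨ω, h1, h2⟩ := (hpos.and ((Measure.measure_support_eq_zero_iff P).1 h0)).exists
  exact h1.ne' h2

lemma integrable_upperTail {g : Ω → ℝ} (hg : Integrable g P) (b : ℝ) :
    Integrable (fun ω => upperTail b (g ω)) P :=
  hg.mono ((measurable_upperTail b).comp_aemeasurable hg.aemeasurable).aestronglyMeasurable
    (ae_of_all _ fun ω => abs_upperTail_le b (g ω))

lemma tendsto_integral_upperTail {g : Ω → ℝ} (hg : Integrable g P) :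
    Tendsto (fun M : ℕ => ∫ ω, upperTail M (g ω) ∂P) atTop (𝓝 0) := by
  have h := tendsto_integral_of_dominated_convergence (fun ω => |g ω|)
    (fun M => (integrable_upperTail hg (M : ℝ)).aestronglyMeasurable) hg.abs
    (fun M => ae_of_all _ fun ω => abs_upperTail_le M (g ω))
    (ae_of_all _ fun ω => tendsto_const_nhds.congr' <|
      (tendsto_natCast_atTop_atTop.eventually_ge_atTop (g ω)).mono fun M hM =>
        (if_neg hM.not_gt).symm)
  simpa using h

lemma ae_tendsto_sampleMean {E : Type*} [MeasurableSpace E] {Z : ℕ → Ω → E}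
    (hindep : iIndepFun Z P) (hident : ∀ i, IdentDistrib (Z i) (Z 0) P P) {g : E → ℝ}
    (hg : Measurable g) (hint : Integrable (fun ω => g (Z 0 ω)) P) :
    ∀ᵐ ω ∂P, Tendsto (sampleMean fun i => g (Z i ω)) atTop (𝓝 (∫ ω, g (Z 0 ω) ∂P)) :=
  strong_law_ae_real (fun i ω => g (Z i ω)) hint
    (fun _ _ hij => (hindep.indepFun hij).comp hg hg) (fun i => (hident i).comp hg)

variable {Y : ℕ → Ω → ℝ} {y : ℝ}

lemma measurable_indLE {i : ℕ} (hY : Measurable (Y i)) : Measurable (indLE Y y i) :=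
  measurable_const.ite (measurableSet_le hY measurable_const) measurable_const

lemma integral_indLE [IsFiniteMeasure P] {i : ℕ} (hY : Measurable (Y i)) :
    ∫ ω, indLE Y y i ω ∂P = (P {ω | Y i ω ≤ y}).toReal := by
  rw [indLE_eq_indicator, integral_indicator_one (measurableSet_le hY measurable_const),
    Measure.real]

lemma integrable_indLE [IsFiniteMeasure P] {i : ℕ} (hY : Measurable (Y i)) :
    Integrable (indLE Y y i) P := by
  rw [indLE_eq_indicator]
  exact (integrable_const 1).indicator (measurableSet_le hY measurable_const)

lemma MeasureTheory.Integrable.mul_indLE {g : Ω → ℝ} (hg : Integrable g P) {i : ℕ}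
    (hY : Measurable (Y i)) :
    Integrable (fun ω => g ω * indLE Y y i ω) P :=
  hg.mul_bdd (measurable_indLE hY).aestronglyMeasurable
    (ae_of_all _ fun ω => abs_le.2 ⟨by linarith [indLE_nonneg Y y ω i], indLE_le_one Y y ω i⟩)

end Probability

theorem stmt_7_general
    {Ω : Type*} [MeasurableSpace Ω] (P : Measure Ω) [IsProbabilityMeasure P]
    (Y X : ℕ → Ω → ℝ)
    (hmeas : ∀ i, Measurable fun ω => (Y i ω, X i ω))
    (hindep : iIndepFun (fun i ω => (Y i ω, X i ω)) P)
    (hident : ∀ i, IdentDistrib (fun ω => (Y i ω, X i ω)) (fun ω => (Y 0 ω, X 0 ω)) P P)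
    (hpos : ∀ i, ∀ᵐ ω ∂P, 0 < X i ω)
    (hm2 : Integrable (fun ω => X 0 ω ^ 2) P)
    (hminv : Integrable (fun ω => (X 0 ω)⁻¹) P)
    (n : ℕ → ℕ) (f : ℝ) (hf0 : 0 < f)
    (hfN : Tendsto (fun N : ℕ => (n N : ℝ) / N) atTop (𝓝 f))
    (d : ℝ)
    (hd : d = f * (1 - (∫ ω, X 0 ω ^ 2 ∂P) / (∫ ω, X 0 ω ∂P) ^ 2) +
        f * (1 - f) * ((∫ ω, X 0 ω ^ 2 ∂P) / (∫ ω, X 0 ω ∂P) ^ 2))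
    (hdpos : 0 < d)
    (y : ℝ)
    (hsigma : 0 <
      ((∫ ω, X 0 ω ∂P) / f * (∫ ω, (X 0 ω)⁻¹ * indLE Y y 0 ω ∂P) -
          (P {ω | Y 0 ω ≤ y}).toReal) * (1 - (P {ω | Y 0 ω ≤ y}).toReal) -
        (∫ ω, X 0 ω ∂P) / f *
          ((∫ ω, (X 0 ω)⁻¹ * indLE Y y 0 ω ∂P) -
            (∫ ω, (X 0 ω)⁻¹ ∂P) * (P {ω | Y 0 ω ≤ y}).toReal) *
          (P {ω | Y 0 ω ≤ y}).toReal -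
        f ^ 2 / d *
          ((P {ω | Y 0 ω ≤ y}).toReal -
            (∫ ω, X 0 ω * indLE Y y 0 ω ∂P) / ∫ ω, X 0 ω ∂P) ^ 2) :
    ∀ ε > (0 : ℝ), ∀ᵐ ω ∂P,
      Tendsto (fun N : ℕ => LN2 Y X n y ε N ω / SN2 Y X n y N ω) atTop (𝓝 0) := by
  intro ε hε
  have hXm : Measurable (X 0) := measurable_snd.comp (hmeas 0)
  have hYm : Measurable (Y 0) := measurable_fst.comp (hmeas 0)
  have hX : Integrable (X 0) P :=
    ((memLp_two_iff_integrable_sq hXm.aestronglyMeasurable).2 hm2).integrable one_le_two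
  have hind : Measurable fun p : ℝ × ℝ => if p.1 ≤ y then (1 : ℝ) else 0 :=
    measurable_const.ite (measurableSet_le measurable_fst measurable_const) measurable_const
  have slln := fun (g : ℝ × ℝ → ℝ) (hg : Measurable g) hint =>
    ae_tendsto_sampleMean (P := P) hindep hident hg hint
  have htail : ∀ᵐ ω ∂P, ∀ M : ℕ, Tendsto (sampleMean fun i => upperTail M (X i ω)⁻¹) atTop
      (𝓝 (∫ ω, upperTail M (X 0 ω)⁻¹ ∂P)) := ae_all_iff.2 fun M =>
    slln (fun p => upperTail M p.2⁻¹) ((measurable_upperTail M).comp measurable_snd.inv)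
      (integrable_upperTail hminv M)
  rw [← integral_indLE hYm] at hsigma
  filter_upwards [slln (·.2) measurable_snd hX, slln (·.2 ^ 2) (measurable_snd.pow_const 2) hm2,
    slln (·.2⁻¹) measurable_snd.inv hminv, slln _ hind (integrable_indLE hYm),
    slln (fun p => p.2⁻¹ * if p.1 ≤ y then 1 else 0) (measurable_snd.inv.mul hind)
      (hminv.mul_indLE hYm),
    slln (fun p => p.2 * if p.1 ≤ y then 1 else 0) (measurable_snd.mul hind) (hX.mul_indLE hYm),
    htail, ae_all_iff.2 hpos]
    with ω hX1 hX2 hXinv hU hkinv hk htail hx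
  exact tendsto_LN2_div_SN2 hx hε hf0 (integral_pos_of_ae_pos_s7 hX (hpos 0)) hfN hX1 hX2 hXinv
    hU hkinv hk htail (tendsto_integral_upperTail hminv) hd hdpos.ne' hsigma

/-- Lemma 5 of the paper: the Lindeberg condition `L_N(ε)²/S_N²(y) → 0` a.s. -/
theorem stmt_7
    {Ω : Type*} [MeasurableSpace Ω] (P : Measure Ω) [IsProbabilityMeasure P]
    (Y X : ℕ → Ω → ℝ)
    (hmeas : ∀ i, Measurable fun ω => (Y i ω, X i ω))
    (hindep : iIndepFun (fun i ω => (Y i ω, X i ω)) P)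
    (hident : ∀ i, IdentDistrib (fun ω => (Y i ω, X i ω)) (fun ω => (Y 0 ω, X 0 ω)) P P)
    (hpos : ∀ i, ∀ᵐ ω ∂P, 0 < X i ω)
    (hm2 : Integrable (fun ω => X 0 ω ^ 2) P)
    (hminv : Integrable (fun ω => (X 0 ω)⁻¹) P)
    (n : ℕ → ℕ) (f : ℝ) (hf0 : 0 < f) (hf1 : f < 1)
    (hfN : Tendsto (fun N : ℕ => (n N : ℝ) / N) atTop (𝓝 f))
    (d : ℝ)
    (hd : d = f * (1 - (∫ ω, X 0 ω ^ 2 ∂P) / (∫ ω, X 0 ω ∂P) ^ 2) +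
        f * (1 - f) * ((∫ ω, X 0 ω ^ 2 ∂P) / (∫ ω, X 0 ω ∂P) ^ 2))
    (hdpos : 0 < d)
    (y : ℝ)
    (hsigma : 0 <
      ((∫ ω, X 0 ω ∂P) / f * (∫ ω, (X 0 ω)⁻¹ * indLE Y y 0 ω ∂P) -
          (P {ω | Y 0 ω ≤ y}).toReal) * (1 - (P {ω | Y 0 ω ≤ y}).toReal) -
        (∫ ω, X 0 ω ∂P) / f *
          ((∫ ω, (X 0 ω)⁻¹ * indLE Y y 0 ω ∂P) -
            (∫ ω, (X 0 ω)⁻¹ ∂P) * (P {ω | Y 0 ω ≤ y}).toReal) *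
          (P {ω | Y 0 ω ≤ y}).toReal -
        f ^ 2 / d *
          ((P {ω | Y 0 ω ≤ y}).toReal -
            (∫ ω, X 0 ω * indLE Y y 0 ω ∂P) / ∫ ω, X 0 ω ∂P) ^ 2) :
    ∀ ε > (0 : ℝ), ∀ᵐ ω ∂P,
      Tendsto (fun N : ℕ => LN2 Y X n y ε N ω / SN2 Y X n y N ω) atTop (𝓝 0) :=
  stmt_7_general P Y X hmeas hindep hident hpos hm2 hminv n f hf0 hfN d hd hdpos y hsigma
end

section
/- Let C > 0 and B > 0. For each N, let π_{1,N}, …, π_{N,N} ∈ (0,1] be deterministic numbers with N⁻¹∑_{i=1}^N π_{i,N}⁻¹ ≤ B, and let D_{1,N}, …, D_{N,N} be {0,1}-valued random variables with 𝔼[D_{i,N}] = π_{i,N} and such that the second-order moments π_{ij} := 𝔼[D_{i,N} D_{j,N}] satisfy |π_{ij} − π_{i,N}π_{j,N}| ≤ (C/N)·π_{i,N}π_{j,N} for all i ≠ j. Then N⁻¹∑_{i=1}^N D_{i,N}/π_{i,N} → 1 in probability as N → ∞. (Lemma of the paper (Lemma 5b): design-based law of large numbers for high-entropy designs, whose second-order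 inclusion probabilities satisfy the Hájek bound.) -/
/-!
Chebyshev's inequality. The Horvitz–Thompson mean `N⁻¹ ∑ᵢ Dᵢ/πᵢ` has expectation `1`, and its
variance is `N⁻² ∑ᵢⱼ cov(Dᵢ, Dⱼ)/(πᵢπⱼ)`. A `[0,1]`-valued `Dᵢ` has variance at most `πᵢ`, so the
`N` diagonal terms contribute at most `∑ᵢ πᵢ⁻¹ ≤ N B`, while by the Hájek bound each of the
`N(N-1)` off-diagonal terms is at most `C/N`. Hence the variance is at most `(B + C)/N`.
-/

open MeasureTheory ProbabilityTheory Filter Topology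
open Finset

section

variable {Ω : Type*} [MeasurableSpace Ω] {P : Measure Ω}

theorem variance_sum_le_of_covariance_le [IsFiniteMeasure P] {ι : Type*} {s : Finset ι}
    {Y : ι → Ω → ℝ} (hY : ∀ i ∈ s, MemLp (Y i) 2 P) {v : ι → ℝ} {c : ℝ}
    (hvar : ∀ i ∈ s, Var[Y i; P] ≤ v i)
    (hcov : ∀ i ∈ s, ∀ j ∈ s, i ≠ j → cov[Y i, Y j; P] ≤ c) :
    Var[fun ω ↦ ∑ i ∈ s, Y i ω; P] ≤ ∑ i ∈ s, v i + #s * (#s - 1) * c := by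
  classical
  have hrow : ∀ i ∈ s, ∑ j ∈ s, cov[Y i, Y j; P] ≤ v i + (#s - 1) * c := by
    intro i hi
    have hoff : ∑ j ∈ s.erase i, cov[Y i, Y j; P] ≤ #(s.erase i) • c :=
      sum_le_card_nsmul _ _ _ fun j hj ↦ hcov i hi j (mem_of_mem_erase hj) (ne_of_mem_erase hj).symm
    rw [← add_sum_erase s _ hi, covariance_self (hY i hi).aemeasurable]
    rw [card_erase_of_mem hi, nsmul_eq_mul, Nat.cast_pred (card_pos.mpr ⟨i, hi⟩)] at hoff
    exact add_le_add (hvar i hi) hoff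
  calc Var[fun ω ↦ ∑ i ∈ s, Y i ω; P] = ∑ i ∈ s, ∑ j ∈ s, cov[Y i, Y j; P] :=
        variance_fun_sum' hY
    _ ≤ ∑ i ∈ s, (v i + (#s - 1) * c) := sum_le_sum hrow
    _ = ∑ i ∈ s, v i + #s * (#s - 1) * c := by
        rw [sum_add_distrib, sum_const, nsmul_eq_mul, mul_assoc]

variable {ι : Type*} {s : Finset ι} {π : ι → ℝ} {D : ι → Ω → ℝ}

theorem integral_sum_div_eq_card (hπ : ∀ i ∈ s, π i ≠ 0) (hD : ∀ i ∈ s, Integrable (D i) P)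
    (hmean : ∀ i ∈ s, P[D i] = π i) :
    P[fun ω ↦ ∑ i ∈ s, D i ω / π i] = (#s : ℝ) := by
  rw [integral_finsetSum s fun i hi ↦ (hD i hi).div_const _]
  simp_rw [integral_div]
  rw [sum_congr rfl fun i hi ↦ by rw [hmean i hi, div_self (hπ i hi)]]
  simp

variable [IsProbabilityMeasure P]

theorem variance_div_le_inv {Z : Ω → ℝ} (hZ : ∀ ω, Z ω ∈ Set.Icc 0 1) (hZm : Measurable Z)
    {p : ℝ} (hp : 0 < p) (hmean : P[Z] = p) :
    Var[fun ω ↦ Z ω / p; P] ≤ p⁻¹ := by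
  have hvar : Var[Z; P] ≤ p := by
    have h := variance_le_sub_mul_sub (ae_of_all P hZ) hZm.aemeasurable
    rw [hmean] at h
    nlinarith
  simp_rw [div_eq_mul_inv, variance_mul_const]
  calc Var[Z; P] * p⁻¹ ^ 2 ≤ p * p⁻¹ ^ 2 := by gcongr
    _ = p⁻¹ := by field_simp

theorem variance_sum_div_le {c : ℝ} (hπ : ∀ i ∈ s, 0 < π i)
    (hD : ∀ i ω, D i ω ∈ Set.Icc 0 1) (hDm : ∀ i, Measurable (D i))
    (hmean : ∀ i ∈ s, P[D i] = π i)
    (hcov : ∀ i ∈ s, ∀ j ∈ s, i ≠ j → cov[D i, D j; P] ≤ c * (π i * π j)) :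
    Var[fun ω ↦ ∑ i ∈ s, D i ω / π i; P] ≤ ∑ i ∈ s, (π i)⁻¹ + #s * (#s - 1) * c := by
  refine variance_sum_le_of_covariance_le (Y := fun i ω ↦ D i ω / π i)
    (fun i _ ↦ by
      simpa only [div_eq_mul_inv] using
        (memLp_of_bounded (ae_of_all P (hD i)) (hDm i).aestronglyMeasurable 2).mul_const _)
    (fun i hi ↦ variance_div_le_inv (hD i) (hDm i) (hπ i hi) (hmean i hi))
    fun i hi j hj hij ↦ ?_
  have hππ : 0 < π i * π j := mul_pos (hπ i hi) (hπ j hj)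
  rw [covariance_fun_div_left, covariance_fun_div_right, div_div, mul_comm (π j), div_le_iff₀ hππ]
  exact hcov i hi j hj hij

theorem variance_horvitzThompson_le {N : ℕ} (hN : 0 < N) {π : ℕ → ℝ} {D : ℕ → Ω → ℝ} {B C : ℝ}
    (hC : 0 ≤ C) (hπ : ∀ i < N, 0 < π i)
    (hπB : (N : ℝ)⁻¹ * ∑ i ∈ range N, (π i)⁻¹ ≤ B)
    (hD : ∀ i ω, D i ω ∈ Set.Icc 0 1) (hDm : ∀ i, Measurable (D i))
    (hmean : ∀ i < N, P[D i] = π i)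
    (hcov : ∀ i < N, ∀ j < N, i ≠ j → cov[D i, D j; P] ≤ C / N * (π i * π j)) :
    Var[fun ω ↦ (N : ℝ)⁻¹ * ∑ i ∈ range N, D i ω / π i; P] ≤ (B + C) / N := by
  have hNR : (0 : ℝ) < N := Nat.cast_pos.mpr hN
  have hsum := variance_sum_div_le (P := P) (s := range N) (c := C / N)
    (fun i hi ↦ hπ i (mem_range.mp hi)) hD hDm (fun i hi ↦ hmean i (mem_range.mp hi))
    fun i hi j hj ↦ hcov i (mem_range.mp hi) j (mem_range.mp hj)
  rw [card_range] at hsum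
  rw [variance_const_mul]
  calc ((N : ℝ)⁻¹) ^ 2 * Var[fun ω ↦ ∑ i ∈ range N, D i ω / π i; P]
      ≤ ((N : ℝ)⁻¹) ^ 2 * (∑ i ∈ range N, (π i)⁻¹ + N * (N - 1) * (C / N)) := by gcongr
    _ = ((N : ℝ)⁻¹ * ∑ i ∈ range N, (π i)⁻¹ + (1 - (N : ℝ)⁻¹) * C) / N := by
        field_simp
    _ ≤ (B + C) / N := by
        gcongr
        nlinarith [inv_pos.mpr hNR]

end

theorem tendsto_measure_abs_sub_ge_of_tendsto_variance {Ω ι : Type*} [MeasurableSpace Ω]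
    {μ : Measure Ω} [IsFiniteMeasure μ] {l : Filter ι} {X : ι → Ω → ℝ} {m ε : ℝ}
    (hX : ∀ n, MemLp (X n) 2 μ) (hmean : ∀ᶠ n in l, μ[X n] = m)
    (hvar : Tendsto (fun n ↦ Var[X n; μ]) l (𝓝 0)) (hε : 0 < ε) :
    Tendsto (fun n ↦ μ {ω | ε ≤ |X n ω - m|}) l (𝓝 0) := by
  have hbound : Tendsto (fun n ↦ ENNReal.ofReal (Var[X n; μ] / ε ^ 2)) l (𝓝 0) := by
    simpa using ENNReal.tendsto_ofReal (hvar.div_const (ε ^ 2))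
  refine tendsto_of_tendsto_of_tendsto_of_le_of_le' tendsto_const_nhds hbound
    (Eventually.of_forall fun _ ↦ zero_le) ?_
  filter_upwards [hmean] with n hn
  simpa only [hn] using meas_ge_le_variance_div_sq (hX n) hε

theorem stmt_8_general
    {Ω : Type*} [MeasurableSpace Ω] (P : Measure Ω) [IsProbabilityMeasure P]
    (C B : ℝ) (hC : 0 < C)
    (π : ℕ → ℕ → ℝ) (D : ℕ → ℕ → Ω → ℝ)
    (hπ : ∀ N, ∀ i < N, 0 < π N i ∧ π N i ≤ 1)
    (hπB : ∀ N : ℕ, 0 < N → (N : ℝ)⁻¹ * ∑ i ∈ Finset.range N, (π N i)⁻¹ ≤ B)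
    (hD01 : ∀ N i ω, D N i ω = 0 ∨ D N i ω = 1)
    (hDmeas : ∀ N i, Measurable (D N i))
    (hmean : ∀ N, ∀ i < N, ∫ ω, D N i ω ∂P = π N i)
    (hcov : ∀ N, ∀ i < N, ∀ j < N, i ≠ j →
      |(∫ ω, D N i ω * D N j ω ∂P) - π N i * π N j| ≤ C / N * (π N i * π N j)) :
    ∀ ε > (0 : ℝ),
      Tendsto (fun N : ℕ =>
          P {ω | ε ≤ |(N : ℝ)⁻¹ * (∑ i ∈ Finset.range N, D N i ω / π N i) - 1|}) atTop
        (𝓝 0) := by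
  intro ε hε
  have hD : ∀ N i ω, D N i ω ∈ Set.Icc 0 1 := fun N i ω ↦ by
    rcases hD01 N i ω with h | h <;> simp [h]
  have hL2 : ∀ N i, MemLp (D N i) 2 P := fun N i ↦
    memLp_of_bounded (ae_of_all P (hD N i)) (hDmeas N i).aestronglyMeasurable 2
  have hcov' : ∀ N, ∀ i < N, ∀ j < N, i ≠ j → cov[D N i, D N j; P] ≤ C / N * (π N i * π N j) :=
    fun N i hi j hj hij ↦ by
      rw [covariance_eq_sub (hL2 N i) (hL2 N j), hmean N i hi, hmean N j hj]
      exact (abs_le.mp (hcov N i hi j hj hij)).2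
  refine tendsto_measure_abs_sub_ge_of_tendsto_variance (fun N ↦ ?_) ?_ ?_ hε
  · simpa only [div_eq_mul_inv] using
      (memLp_finsetSum _ fun i _ ↦ (hL2 N i).mul_const (π N i)⁻¹).const_mul (N : ℝ)⁻¹
  · filter_upwards [eventually_gt_atTop 0] with N hN
    rw [integral_const_mul, integral_sum_div_eq_card (fun i hi ↦ (hπ N i (mem_range.mp hi)).1.ne')
      (fun i _ ↦ (hL2 N i).integrable one_le_two) (fun i hi ↦ hmean N i (mem_range.mp hi)),
      card_range, inv_mul_cancel₀ (Nat.cast_pos.mpr hN).ne']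
  · refine tendsto_of_tendsto_of_tendsto_of_le_of_le' tendsto_const_nhds
      (tendsto_const_div_atTop_nhds_zero_nat (B + C))
      (Eventually.of_forall fun _ ↦ variance_nonneg _ _) ?_
    filter_upwards [eventually_gt_atTop 0] with N hN
    exact variance_horvitzThompson_le hN hC.le (fun i hi ↦ (hπ N i hi).1) (hπB N hN) (hD N)
      (hDmeas N) (hmean N) (hcov' N)

/-- Lemma 5b of the paper: design-based law of large numbers for high-entropy designs.
Under the Hájek covariance bound `|π_{ij} − πᵢπⱼ| ≤ (C/N) πᵢπⱼ` and boundedness of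
`N⁻¹ ∑ᵢ πᵢ⁻¹`, the Horvitz–Thompson count `N⁻¹ ∑ᵢ Dᵢ/πᵢ` tends to `1` in probability. -/
theorem stmt_8
    {Ω : Type*} [MeasurableSpace Ω] (P : Measure Ω) [IsProbabilityMeasure P]
    (C B : ℝ) (hC : 0 < C) (hB : 0 < B)
    (π : ℕ → ℕ → ℝ) (D : ℕ → ℕ → Ω → ℝ)
    (hπ : ∀ N, ∀ i < N, 0 < π N i ∧ π N i ≤ 1)
    (hπB : ∀ N : ℕ, 0 < N → (N : ℝ)⁻¹ * ∑ i ∈ Finset.range N, (π N i)⁻¹ ≤ B)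
    (hD01 : ∀ N i ω, D N i ω = 0 ∨ D N i ω = 1)
    (hDmeas : ∀ N i, Measurable (D N i))
    (hmean : ∀ N, ∀ i < N, ∫ ω, D N i ω ∂P = π N i)
    (hcov : ∀ N, ∀ i < N, ∀ j < N, i ≠ j →
      |(∫ ω, D N i ω * D N j ω ∂P) - π N i * π N j| ≤ C / N * (π N i * π N j)) :
    ∀ ε > (0 : ℝ),
      Tendsto (fun N : ℕ =>
          P {ω | ε ≤ |(N : ℝ)⁻¹ * (∑ i ∈ Finset.range N, D N i ω / π N i) - 1|}) atTop
        (𝓝 0) :=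
  stmt_8_general P C B hC π D hπ hπB hD01 hDmeas hmean hcov
end

section
/- Under the superpopulation setup and the high-entropy design hypothesis, for ℙ-almost all realizations of the sequence ((Y_i, X_i))_{i≥1} the following holds: for every ε > 0, the design probability P_N( sup_{y∈ℝ} |F̂_H(y) − F_N(y)| > ε ) tends to 0 as N → ∞; that is, sup_y |F̂_H(y) − F_N(y)| converges to 0 in probability with respect to the sampling design. (Proposition 2 of the paper, a Glivenko–Cantelli-type theorem for the Hájek estimator.) -/
/-!
Fix a realization of the population. For coefficients `|aᵢ| ≤ 1` the Horvitz–Thompson mean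
`N⁻¹ ∑ Dᵢ aᵢ / πᵢ` is unbiased for `N⁻¹ ∑ aᵢ`, and the covariance condition bounds its variance by
`N⁻² ∑ 1 / πᵢ + C / N`, so Chebyshev's inequality controls its deviation. Since the empirical CDF
is monotone with values in `[0, 1]`, `k` brackets cut at its `j / k`-quantiles reduce the
supremum over `y` to `2k + 1` such deviations (one for the Hájek denominator), at the cost of an
additive `1 / k`. Finally `N⁻² ∑ 1 / πᵢ = (N⁻¹ ∑ Xᵢ) (N⁻¹ ∑ Xᵢ⁻¹) / n_N → 0` almost surely, by the
strong law of large numbers applied to `X` and to `X⁻¹`.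
-/

open MeasureTheory ProbabilityTheory Filter Topology Finset

section Design

variable {Ω : Type*} [MeasurableSpace Ω] {ν : Measure Ω} [IsProbabilityMeasure ν]

lemma memLp_of_forall_eq_zero_or_one {f : Ω → ℝ} (hf : Measurable f)
    (h01 : ∀ x, f x = 0 ∨ f x = 1) (p : ENNReal) : MemLp f p ν :=
  MemLp.of_bound hf.aestronglyMeasurable 1
    (ae_of_all _ fun x => by rcases h01 x with h | h <;> simp [h])

lemma covariance_self_le_integral_of_forall_eq_zero_or_one {f : Ω → ℝ} (hf : Measurable f)
    (h01 : ∀ x, f x = 0 ∨ f x = 1) : cov[f, f; ν] ≤ ∫ x, f x ∂ν := by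
  have hff : f * f = f := funext fun x => by rcases h01 x with h | h <;> simp [h]
  have hf2 := memLp_of_forall_eq_zero_or_one (ν := ν) hf h01 2
  rw [covariance_eq_sub hf2 hf2, hff]
  nlinarith [sq_nonneg (∫ x, f x ∂ν)]

lemma mul_mul_covariance_self_le {f : Ω → ℝ} (hf : Measurable f)
    (h01 : ∀ x, f x = 0 ∨ f x = 1) {p a : ℝ} (hp : 0 < p) (hmean : ∫ x, f x ∂ν = p)
    (ha : |a| ≤ 1) : p⁻¹ * a * (p⁻¹ * a) * cov[f, f; ν] ≤ p⁻¹ := by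
  have hV0 : 0 ≤ cov[f, f; ν] := covariance_self hf.aemeasurable ▸ variance_nonneg f ν
  have hVle := hmean ▸ covariance_self_le_integral_of_forall_eq_zero_or_one (ν := ν) hf h01
  have ha2 : a * a ≤ 1 := by nlinarith [abs_le.mp ha, sq_abs a]
  calc p⁻¹ * a * (p⁻¹ * a) * cov[f, f; ν] = (a * a) * (p⁻¹ * p⁻¹ * cov[f, f; ν]) := by ring
    _ ≤ 1 * (p⁻¹ * p⁻¹ * p) := mul_le_mul ha2 (by gcongr) (by positivity) zero_le_one
    _ = p⁻¹ := by field_simp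

lemma mul_mul_covariance_le {f g : Ω → ℝ} (hf : MemLp f 2 ν) (hg : MemLp g 2 ν)
    {p q a b c : ℝ} (hp : 0 < p) (hq : 0 < q) (hmf : ∫ x, f x ∂ν = p) (hmg : ∫ x, g x ∂ν = q)
    (hcov : |∫ x, f x * g x ∂ν - p * q| ≤ c * (p * q)) (ha : |a| ≤ 1) (hb : |b| ≤ 1) :
    p⁻¹ * a * (q⁻¹ * b) * cov[f, g; ν] ≤ c := by
  rw [covariance_eq_sub hf hg]
  change _ * (∫ x, f x * g x ∂ν - (∫ x, f x ∂ν) * ∫ x, g x ∂ν) ≤ c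
  rw [hmf, hmg]
  calc p⁻¹ * a * (q⁻¹ * b) * (∫ x, f x * g x ∂ν - p * q)
      ≤ |a * b| * (p⁻¹ * q⁻¹ * |∫ x, f x * g x ∂ν - p * q|) := by
        rw [← abs_of_pos (mul_pos (inv_pos.2 hp) (inv_pos.2 hq)), ← abs_mul, ← abs_mul]
        exact le_of_eq_of_le (by ring) (le_abs_self _)
    _ ≤ 1 * (p⁻¹ * q⁻¹ * (c * (p * q))) := by
        rw [abs_mul]
        gcongr
        exact mul_le_one₀ ha (abs_nonneg _) hb
    _ = c := by field_simp

lemma variance_sum_mul_inv_le {ι : Type*} {s : Finset ι} {D : ι → Ω → ℝ} {π : ι → ℝ}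
    (hD01 : ∀ i x, D i x = 0 ∨ D i x = 1)
    (hD : ∀ i, Measurable (D i)) (hπ : ∀ i ∈ s, 0 < π i)
    (hmean : ∀ i ∈ s, ∫ x, D i x ∂ν = π i) {c : ℝ} (hc : 0 ≤ c)
    (hcov : ∀ i ∈ s, ∀ j ∈ s, i ≠ j →
      |∫ x, D i x * D j x ∂ν - π i * π j| ≤ c * (π i * π j))
    {a : ι → ℝ} (ha : ∀ i ∈ s, |a i| ≤ 1) :
    Var[fun x => ∑ i ∈ s, D i x * (π i)⁻¹ * a i; ν] ≤ ∑ i ∈ s, (π i)⁻¹ + c * #s ^ 2 := by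
  classical
  have hD2 : ∀ i, MemLp (D i) 2 ν := fun i => memLp_of_forall_eq_zero_or_one (hD i) (hD01 i) 2
  have hterm : ∀ i ∈ s, ∀ j ∈ s,
      cov[fun x => D i x * (π i)⁻¹ * a i, fun x => D j x * (π j)⁻¹ * a j; ν] ≤
        (if i = j then (π i)⁻¹ else 0) + c := by
    intro i hi j hj
    have hcij : cov[fun x => D i x * (π i)⁻¹ * a i, fun x => D j x * (π j)⁻¹ * a j; ν] =
        (π i)⁻¹ * a i * ((π j)⁻¹ * a j) * cov[D i, D j; ν] := by
      simp only [mul_assoc, covariance_mul_const_left, covariance_mul_const_right]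
      ring
    rw [hcij]
    split_ifs with hij
    · subst hij
      exact (mul_mul_covariance_self_le (hD i) (hD01 i) (hπ i hi) (hmean i hi) (ha i hi)).trans
        (le_add_of_nonneg_right hc)
    · exact (zero_add c).symm ▸ mul_mul_covariance_le (hD2 i) (hD2 j) (hπ i hi) (hπ j hj)
        (hmean i hi) (hmean j hj) (hcov i hi j hj hij) (ha i hi) (ha j hj)
  calc Var[fun x => ∑ i ∈ s, D i x * (π i)⁻¹ * a i; ν]
      = ∑ i ∈ s, ∑ j ∈ s,
          cov[fun x => D i x * (π i)⁻¹ * a i, fun x => D j x * (π j)⁻¹ * a j; ν] :=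
        variance_fun_sum' fun i _ => ((hD2 i).mul_const _).mul_const _
    _ ≤ ∑ i ∈ s, ∑ j ∈ s, ((if i = j then (π i)⁻¹ else 0) + c) :=
        sum_le_sum fun i hi => sum_le_sum fun j hj => hterm i hi j hj
    _ = ∑ i ∈ s, (π i)⁻¹ + c * #s ^ 2 := by
        simp only [sum_add_distrib, sum_ite_eq, sum_const, nsmul_eq_mul]
        rw [sum_congr rfl fun i hi => if_pos hi]
        ring

lemma measure_lt_abs_sum_mul_inv_sub_le {D : ℕ → Ω → ℝ} {π : ℕ → ℝ} {N : ℕ} (hN : 0 < N)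
    (hD01 : ∀ i x, D i x = 0 ∨ D i x = 1) (hD : ∀ i, Measurable (D i))
    (hπ : ∀ i < N, 0 < π i) (hmean : ∀ i < N, ∫ x, D i x ∂ν = π i) {c : ℝ} (hc : 0 ≤ c)
    (hcov : ∀ i < N, ∀ j < N, i ≠ j →
      |∫ x, D i x * D j x ∂ν - π i * π j| ≤ c * (π i * π j))
    {a : ℕ → ℝ} (ha : ∀ i, |a i| ≤ 1) {δ : ℝ} (hδ : 0 < δ) :
    ν {x | δ < |(N : ℝ)⁻¹ * ∑ i ∈ range N, D i x * (π i)⁻¹ * a i -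
        (N : ℝ)⁻¹ * ∑ i ∈ range N, a i|} ≤
      ENNReal.ofReal (((N : ℝ)⁻¹ ^ 2 * ∑ i ∈ range N, (π i)⁻¹ + c) / δ ^ 2) := by
  set S : Ω → ℝ := fun x => ∑ i ∈ range N, D i x * (π i)⁻¹ * a i
  have hN' : (0 : ℝ) < N := Nat.cast_pos.mpr hN
  have hterm : ∀ i, MemLp (fun x => D i x * (π i)⁻¹ * a i) 2 ν := fun i =>
    ((memLp_of_forall_eq_zero_or_one (hD i) (hD01 i) 2).mul_const _).mul_const _
  have hS : MemLp S 2 ν := memLp_finsetSum _ fun i _ => hterm i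
  have hES : ν[S] = ∑ i ∈ range N, a i := by
    rw [integral_finsetSum _ fun i _ => (hterm i).integrable one_le_two]
    refine sum_congr rfl fun i hi => ?_
    have hπi := hπ i (mem_range.mp hi)
    rw [integral_mul_const, integral_mul_const, hmean i (mem_range.mp hi)]
    field_simp
  have hVar := variance_sum_mul_inv_le (s := range N) (ν := ν) hD01 hD
    (fun i hi => hπ i (mem_range.mp hi)) (fun i hi => hmean i (mem_range.mp hi)) hc
    (fun i hi j hj => hcov i (mem_range.mp hi) j (mem_range.mp hj)) (fun i _ => ha i)
  rw [card_range] at hVar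
  calc ν {x | δ < |(N : ℝ)⁻¹ * S x - (N : ℝ)⁻¹ * ∑ i ∈ range N, a i|}
      ≤ ν {x | N * δ ≤ |S x - ν[S]|} := by
        refine measure_mono fun x hx => ?_
        simp only [Set.mem_ofPred_eq, ← mul_sub, abs_mul, abs_inv, Nat.abs_cast, hES] at hx ⊢
        rw [lt_inv_mul_iff₀ hN'] at hx
        exact hx.le
    _ ≤ ENNReal.ofReal (Var[S; ν] / (N * δ) ^ 2) :=
        meas_ge_le_variance_div_sq hS (by positivity)
    _ ≤ ENNReal.ofReal (((N : ℝ)⁻¹ ^ 2 * ∑ i ∈ range N, (π i)⁻¹ + c) / δ ^ 2) := by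
        refine ENNReal.ofReal_le_ofReal ?_
        calc Var[S; ν] / (N * δ) ^ 2 ≤ (∑ i ∈ range N, (π i)⁻¹ + c * N ^ 2) / (N * δ) ^ 2 := by
              gcongr
          _ = _ := by field_simp

end Design

noncomputable def empiricalFreq (N : ℕ) (Y : ℕ → ℝ) (A : Set ℝ) : ℝ :=
  (N : ℝ)⁻¹ * ∑ i ∈ range N, A.indicator 1 (Y i)

/-- With `W i = D i / π i` this is the Horvitz–Thompson estimator of `empiricalFreq N Y A`, and
the Hájek estimator of the empirical CDF at `y` is
`weightedFreq N W Y (Set.Iic y) / weightedFreq N W Y Set.univ`. -/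
noncomputable def weightedFreq (N : ℕ) (W Y : ℕ → ℝ) (A : Set ℝ) : ℝ :=
  (N : ℝ)⁻¹ * ∑ i ∈ range N, W i * A.indicator 1 (Y i)

noncomputable def empiricalQuantile (N : ℕ) (Y : ℕ → ℝ) (p : ℝ) : ℝ :=
  let T := ((range N).image Y).filter fun x => p ≤ empiricalFreq N Y (Set.Iic x)
  if h : T.Nonempty then T.min' h else 0

noncomputable def lowerBracket (N : ℕ) (Y : ℕ → ℝ) (k j : ℕ) : Set ℝ :=
  if j = 0 then ∅ else Set.Iic (empiricalQuantile N Y (j / k))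

noncomputable def upperBracket (N : ℕ) (Y : ℕ → ℝ) (k j : ℕ) : Set ℝ :=
  if j + 1 = k then Set.univ else Set.Iio (empiricalQuantile N Y ((j + 1 : ℕ) / k))

section Empirical

variable {N : ℕ} {Y : ℕ → ℝ}

lemma empiricalFreq_nonneg (A : Set ℝ) : 0 ≤ empiricalFreq N Y A :=
  mul_nonneg (by positivity) (sum_nonneg fun i _ => Set.indicator_nonneg (fun _ _ => zero_le_one) _)

lemma empiricalFreq_mono : Monotone (empiricalFreq N Y) := fun A B hAB =>
  mul_le_mul_of_nonneg_left (sum_le_sum fun i _ =>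
    Set.indicator_le_indicator_of_subset hAB (fun _ => zero_le_one) _) (by positivity)

lemma empiricalFreq_congr {A B : Set ℝ} (h : ∀ i < N, Y i ∈ A ↔ Y i ∈ B) :
    empiricalFreq N Y A = empiricalFreq N Y B := by
  classical
  unfold empiricalFreq
  congr 1
  refine sum_congr rfl fun i hi => ?_
  simp only [Set.indicator_apply, h i (mem_range.mp hi)]

lemma empiricalFreq_univ (hN : 0 < N) : empiricalFreq N Y Set.univ = 1 := by
  simp [empiricalFreq, Nat.cast_ne_zero.mpr hN.ne']

lemma empiricalFreq_le_one (A : Set ℝ) : empiricalFreq N Y A ≤ 1 := by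
  rcases N.eq_zero_or_pos with rfl | hN
  · simp [empiricalFreq]
  · exact empiricalFreq_univ (Y := Y) hN ▸ empiricalFreq_mono (Set.subset_univ A)

lemma empiricalFreq_eq_zero_or_exists {A : Set ℝ} (hA : IsLowerSet A) :
    empiricalFreq N Y A = 0 ∨
      ∃ i < N, Y i ∈ A ∧ empiricalFreq N Y (Set.Iic (Y i)) = empiricalFreq N Y A := by
  classical
  by_cases h : ∃ i < N, Y i ∈ A
  · right
    obtain ⟨i, hi, hmax⟩ := exists_max_image ((range N).filter fun i => Y i ∈ A) Y
      (by simpa [Finset.Nonempty] using h)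
    simp only [mem_filter, mem_range] at hi hmax
    refine ⟨i, hi.1, hi.2, empiricalFreq_congr fun i' hi' => ?_⟩
    exact ⟨fun h' => hA h' hi.2, fun h' => hmax i' ⟨hi', h'⟩⟩
  · left
    push Not at h
    rw [empiricalFreq_congr (B := ∅) fun i hi => iff_of_false (h i hi) id]
    simp [empiricalFreq]

lemma empiricalQuantile_le_iff (hN : 0 < N) {p : ℝ} (hp0 : 0 < p) (hp1 : p ≤ 1) (y : ℝ) :
    empiricalQuantile N Y p ≤ y ↔ p ≤ empiricalFreq N Y (Set.Iic y) := by
  set T := ((range N).image Y).filter fun x => p ≤ empiricalFreq N Y (Set.Iic x)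
  have hT : T.Nonempty := by
    obtain ⟨i, hi, hmax⟩ := exists_max_image (range N) Y ⟨0, mem_range.mpr hN⟩
    refine ⟨Y i, mem_filter.mpr ⟨mem_image_of_mem Y hi, ?_⟩⟩
    rwa [empiricalFreq_congr (B := Set.univ) fun i' hi' =>
      iff_of_true (hmax i' (mem_range.mpr hi')) trivial, empiricalFreq_univ hN]
  have hq : empiricalQuantile N Y p = T.min' hT := dif_pos hT
  constructor
  · intro h
    exact (mem_filter.mp (T.min'_mem hT)).2.trans
      (empiricalFreq_mono (Set.Iic_subset_Iic.mpr (hq ▸ h)))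
  · intro h
    rcases empiricalFreq_eq_zero_or_exists (Y := Y) (N := N) (isLowerSet_Iic y) with
      h0 | ⟨i, hi, hiy, hFi⟩
    · linarith
    · rw [hq]
      exact (T.min'_le _ (mem_filter.mpr ⟨mem_image_of_mem Y (mem_range.mpr hi), hFi ▸ h⟩)).trans
        hiy

lemma empiricalFreq_Iio_le {t p : ℝ} (hp : 0 ≤ p)
    (h : ∀ y < t, empiricalFreq N Y (Set.Iic y) ≤ p) : empiricalFreq N Y (Set.Iio t) ≤ p := by
  rcases empiricalFreq_eq_zero_or_exists (Y := Y) (N := N) (isLowerSet_Iio t) with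
    h0 | ⟨i, -, hit, hFi⟩
  · exact h0 ▸ hp
  · exact hFi ▸ h _ hit

lemma exists_bracket_Iic (hN : 0 < N) {k : ℕ} (hk : 0 < k) (y : ℝ) :
    ∃ j < k, lowerBracket N Y k j ⊆ Set.Iic y ∧ Set.Iic y ⊆ upperBracket N Y k j := by
  have hk' : (0 : ℝ) < k := Nat.cast_pos.mpr hk
  set m := ⌊k * empiricalFreq N Y (Set.Iic y)⌋₊
  have hm : (m : ℝ) ≤ k * empiricalFreq N Y (Set.Iic y) :=
    Nat.floor_le (mul_nonneg hk'.le (empiricalFreq_nonneg _))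
  have hm1 : k * empiricalFreq N Y (Set.Iic y) < m + 1 := Nat.lt_floor_add_one _
  refine ⟨min m (k - 1), by omega, ?_, ?_⟩
  · unfold lowerBracket
    split_ifs with h0
    · exact Set.empty_subset _
    · refine Set.Iic_subset_Iic.mpr ((empiricalQuantile_le_iff hN (by positivity)
        (div_le_one_of_le₀ (Nat.cast_le.mpr (by omega)) hk'.le) y).mpr ?_)
      rw [div_le_iff₀' hk']
      exact le_trans (Nat.cast_le.mpr (min_le_left _ _)) hm
  · unfold upperBracket
    split_ifs with hk1
    · exact Set.subset_univ _
    · rw [show min m (k - 1) = m by omega]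
      refine Set.Iic_subset_Iio.mpr (lt_of_not_ge fun hle => ?_)
      have := (empiricalQuantile_le_iff hN (by positivity)
        (div_le_one_of_le₀ (Nat.cast_le.mpr (by omega)) hk'.le) y).mp hle
      rw [div_le_iff₀' hk'] at this
      push_cast at this
      linarith

lemma empiricalFreq_upperBracket_sub_lowerBracket_le (hN : 0 < N) {k j : ℕ} (hj : j < k) :
    empiricalFreq N Y (upperBracket N Y k j) - empiricalFreq N Y (lowerBracket N Y k j) ≤
      1 / k := by
  have hk' : (0 : ℝ) < k := Nat.cast_pos.mpr (j.zero_le.trans_lt hj)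
  have hl : (j : ℝ) / k ≤ empiricalFreq N Y (lowerBracket N Y k j) := by
    unfold lowerBracket
    split_ifs with h0
    · simp [h0, empiricalFreq_nonneg]
    · exact (empiricalQuantile_le_iff hN (by positivity)
        (div_le_one_of_le₀ (Nat.cast_le.mpr hj.le) hk'.le) _).mp le_rfl
  have hu : empiricalFreq N Y (upperBracket N Y k j) ≤ ((j : ℝ) + 1) / k := by
    unfold upperBracket
    split_ifs with hk1
    · rw [← Nat.cast_add_one, hk1, div_self hk'.ne']
      exact empiricalFreq_le_one _
    · refine empiricalFreq_Iio_le (by positivity) fun y hy => ?_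
      have := (not_congr (empiricalQuantile_le_iff hN (by positivity)
        (div_le_one_of_le₀ (Nat.cast_le.mpr (by omega)) hk'.le) y)).mp (not_le.mpr hy)
      push_cast at this
      linarith
  calc _ ≤ ((j : ℝ) + 1) / k - j / k := sub_le_sub hu hl
    _ = 1 / k := by ring

end Empirical

lemma abs_sub_le_of_bracket {α : Type*} [Preorder α] {L M : α → ℝ} (hL : Monotone L)
    (hM : Monotone M) {l c u : α} (hlc : l ≤ c) (hcu : c ≤ u) {η κ : ℝ}
    (hl : |L l - M l| ≤ η) (hu : |L u - M u| ≤ η) (hlu : M u - M l ≤ κ) :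
    |L c - M c| ≤ η + κ := by
  have := hL hlc
  have := hL hcu
  have := hM hlc
  have := hM hcu
  rw [abs_le] at hl hu ⊢
  constructor <;> linarith

lemma abs_div_sub_le_four_mul {u v B δ : ℝ} (hv0 : 0 ≤ v) (hv1 : v ≤ 1) (huv : |u - v| ≤ δ)
    (hB : |B - 1| ≤ δ) (hδ : δ ≤ 1 / 2) : |u / B - v| ≤ 4 * δ := by
  have hB0 : 1 / 2 ≤ B := by linarith [(abs_le.mp hB).1]
  have hB0' : 0 < B := by linarith
  rw [div_sub' hB0'.ne', abs_div, abs_of_pos hB0', div_le_iff₀ hB0']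
  calc |u - B * v| = |(u - v) + v * (1 - B)| := by ring_nf
    _ ≤ |u - v| + v * |B - 1| := by
        rw [abs_sub_comm B, ← abs_of_nonneg hv0, ← abs_mul, abs_of_nonneg hv0]
        exact abs_add_le _ _
    _ ≤ δ + 1 * δ := add_le_add huv (mul_le_mul hv1 hB (abs_nonneg _) zero_le_one)
    _ ≤ 4 * δ * B := by nlinarith [abs_nonneg (B - 1)]

lemma weightedFreq_mono {N : ℕ} {W Y : ℕ → ℝ} (hW : ∀ i < N, 0 ≤ W i) :
    Monotone (weightedFreq N W Y) := fun A B hAB =>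
  mul_le_mul_of_nonneg_left (sum_le_sum fun i hi => mul_le_mul_of_nonneg_left
    (Set.indicator_le_indicator_of_subset hAB (fun _ => zero_le_one) _)
    (hW i (mem_range.mp hi))) (by positivity)

lemma empiricalFreq_Iic (N : ℕ) (Y : ℕ → ℝ) (y : ℝ) :
    (N : ℝ)⁻¹ * ∑ i ∈ range N, (if Y i ≤ y then (1 : ℝ) else 0) =
      empiricalFreq N Y (Set.Iic y) := by
  simp [empiricalFreq, Set.indicator_apply]

lemma weightedFreq_Iic_div_univ {N : ℕ} (hN : 0 < N) (W Y : ℕ → ℝ) (y : ℝ) :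
    (∑ i ∈ range N, W i * (if Y i ≤ y then (1 : ℝ) else 0)) / (∑ i ∈ range N, W i) =
      weightedFreq N W Y (Set.Iic y) / weightedFreq N W Y Set.univ := by
  simp [weightedFreq, Set.indicator_apply, mul_div_mul_left, hN.ne']

lemma iSup_abs_hajek_sub_le {N k : ℕ} (hN : 0 < N) {W Y : ℕ → ℝ}
    (hW : ∀ i < N, 0 ≤ W i) {l u : ℕ → Set ℝ}
    (hcover : ∀ y, ∃ j < k, l j ⊆ Set.Iic y ∧ Set.Iic y ⊆ u j) {η : ℝ}
    (hsize : ∀ j < k, empiricalFreq N Y (u j) - empiricalFreq N Y (l j) ≤ η)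
    {δ : ℝ} (hδ : δ ≤ 1 / 2)
    (huniv : |weightedFreq N W Y Set.univ - empiricalFreq N Y Set.univ| ≤ δ)
    (hl : ∀ j < k, |weightedFreq N W Y (l j) - empiricalFreq N Y (l j)| ≤ δ)
    (hu : ∀ j < k, |weightedFreq N W Y (u j) - empiricalFreq N Y (u j)| ≤ δ) :
    ⨆ y : ℝ, |(∑ i ∈ range N, W i * (if Y i ≤ y then (1 : ℝ) else 0)) / (∑ i ∈ range N, W i) -
      (N : ℝ)⁻¹ * ∑ i ∈ range N, (if Y i ≤ y then (1 : ℝ) else 0)| ≤ 4 * δ + η := by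
  rw [empiricalFreq_univ hN] at huniv
  have hB : 0 ≤ weightedFreq N W Y Set.univ := by linarith [(abs_le.mp huniv).1]
  have hratio : ∀ A, |weightedFreq N W Y A - empiricalFreq N Y A| ≤ δ →
      |weightedFreq N W Y A / weightedFreq N W Y Set.univ - empiricalFreq N Y A| ≤ 4 * δ :=
    fun A hA =>
      abs_div_sub_le_four_mul (empiricalFreq_nonneg A) (empiricalFreq_le_one A) hA huniv hδ
  refine ciSup_le fun y => ?_
  obtain ⟨j, hj, hlj, huj⟩ := hcover y
  have hy : |weightedFreq N W Y (Set.Iic y) / weightedFreq N W Y Set.univ -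
      empiricalFreq N Y (Set.Iic y)| ≤ 4 * δ + η :=
    abs_sub_le_of_bracket (L := fun A => weightedFreq N W Y A / weightedFreq N W Y Set.univ)
      (fun A B hAB => div_le_div_of_nonneg_right (weightedFreq_mono hW hAB) hB)
      empiricalFreq_mono hlj huj (hratio _ (hl j hj)) (hratio _ (hu j hj)) (hsize j hj)
  rwa [empiricalFreq_Iic, weightedFreq_Iic_div_univ hN]

theorem measure_lt_iSup_abs_hajek_sub_le {Ω : Type*} [MeasurableSpace Ω] {ν : Measure Ω}
    [IsProbabilityMeasure ν] {N k : ℕ} (hN : 0 < N) (hk : 0 < k) {Y π : ℕ → ℝ}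
    (hπ : ∀ i < N, 0 < π i) {D : ℕ → Ω → ℝ} (hD01 : ∀ i x, D i x = 0 ∨ D i x = 1)
    (hD : ∀ i, Measurable (D i)) (hmean : ∀ i < N, ∫ x, D i x ∂ν = π i) {c : ℝ} (hc : 0 ≤ c)
    (hcov : ∀ i < N, ∀ j < N, i ≠ j →
      |∫ x, D i x * D j x ∂ν - π i * π j| ≤ c * (π i * π j))
    {ε δ : ℝ} (hδ0 : 0 < δ) (hδ : δ ≤ 1 / 2) (hε : 4 * δ + 1 / k < ε) :
    ν {x | ε < ⨆ y : ℝ,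
        |(∑ i ∈ range N, D i x * (π i)⁻¹ * (if Y i ≤ y then (1 : ℝ) else 0)) /
            (∑ i ∈ range N, D i x * (π i)⁻¹) -
          (N : ℝ)⁻¹ * ∑ i ∈ range N, (if Y i ≤ y then (1 : ℝ) else 0)|} ≤
      ENNReal.ofReal ((2 * k + 1) * (((N : ℝ)⁻¹ ^ 2 * ∑ i ∈ range N, (π i)⁻¹ + c) / δ ^ 2)) := by
  classical
  set l := lowerBracket N Y k
  set u := upperBracket N Y k
  set 𝒜 : Finset (Set ℝ) := insert Set.univ ((range k).image l ∪ (range k).image u)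
  set W : Ω → ℕ → ℝ := fun x i => D i x * (π i)⁻¹
  set V : ℝ := ((N : ℝ)⁻¹ ^ 2 * ∑ i ∈ range N, (π i)⁻¹ + c) / δ ^ 2
  have hbad : {x | ε < ⨆ y : ℝ,
      |(∑ i ∈ range N, D i x * (π i)⁻¹ * (if Y i ≤ y then (1 : ℝ) else 0)) /
          (∑ i ∈ range N, D i x * (π i)⁻¹) -
        (N : ℝ)⁻¹ * ∑ i ∈ range N, (if Y i ≤ y then (1 : ℝ) else 0)|} ⊆
      ⋃ A ∈ 𝒜, {x | δ < |weightedFreq N (W x) Y A - empiricalFreq N Y A|} := by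
    intro x hx
    by_contra hgood
    simp only [Set.mem_iUnion, not_exists, Set.mem_ofPred_eq, not_lt] at hgood
    refine lt_irrefl ε (hx.trans ((iSup_abs_hajek_sub_le hN (W := W x) (fun i hi => ?_)
      (exists_bracket_Iic hN hk) (fun j hj => empiricalFreq_upperBracket_sub_lowerBracket_le hN hj)
      hδ (hgood _ (mem_insert_self _ _))
      (fun j hj => hgood _ (mem_insert_of_mem (mem_union_left _
        (mem_image_of_mem l (mem_range.mpr hj)))))
      (fun j hj => hgood _ (mem_insert_of_mem (mem_union_right _
        (mem_image_of_mem u (mem_range.mpr hj)))))).trans_lt hε))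
    rcases hD01 i x with h | h <;> simp [W, h, (hπ i hi).le]
  have hcheb : ∀ A, ν {x | δ < |weightedFreq N (W x) Y A - empiricalFreq N Y A|} ≤
      ENNReal.ofReal V := fun A =>
    measure_lt_abs_sum_mul_inv_sub_le hN hD01 hD hπ hmean hc hcov
      (a := fun i => A.indicator 1 (Y i)) (fun i => by by_cases h : Y i ∈ A <;> simp [h]) hδ0
  have hcard : #𝒜 ≤ 2 * k + 1 := by
    refine (card_insert_le _ _).trans (Nat.succ_le_succ ((card_union_le _ _).trans ?_))
    linarith [card_image_le (s := range k) (f := l), card_image_le (s := range k) (f := u),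
      card_range k]
  calc _ ≤ ∑ A ∈ 𝒜, ν {x | δ < |weightedFreq N (W x) Y A - empiricalFreq N Y A|} :=
        (measure_mono hbad).trans (measure_biUnion_finset_le _ _)
    _ ≤ #𝒜 • ENNReal.ofReal V := sum_le_card_nsmul _ _ _ fun A _ => hcheb A
    _ ≤ (2 * k + 1) • ENNReal.ofReal V := nsmul_le_nsmul_left zero_le hcard
    _ = ENNReal.ofReal ((2 * k + 1) * V) := by
        rw [nsmul_eq_mul, ENNReal.ofReal_mul (by positivity), ← ENNReal.ofReal_natCast]
        push_cast
        rfl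

lemma tendsto_sum_inv_inclusionProb {x : ℕ → ℝ} {n : ℕ → ℕ} {a b : ℝ}
    (hx : Tendsto (fun N : ℕ => (∑ i ∈ range N, x i) / N) atTop (𝓝 a))
    (hxinv : Tendsto (fun N : ℕ => (∑ i ∈ range N, (x i)⁻¹) / N) atTop (𝓝 b))
    (hn : Tendsto (fun N => (n N : ℝ)) atTop atTop) :
    Tendsto (fun N : ℕ =>
      (N : ℝ)⁻¹ ^ 2 * ∑ i ∈ range N, ((n N : ℝ) * x i / ∑ j ∈ range N, x j)⁻¹) atTop (𝓝 0) := by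
  have hid : ∀ N : ℕ,
      (N : ℝ)⁻¹ ^ 2 * ∑ i ∈ range N, ((n N : ℝ) * x i / ∑ j ∈ range N, x j)⁻¹ =
        (∑ i ∈ range N, x i) / N * ((∑ i ∈ range N, (x i)⁻¹) / N) * (n N : ℝ)⁻¹ := fun N => by
    have hterm : ∀ i, ((n N : ℝ) * x i / ∑ j ∈ range N, x j)⁻¹ =
        (∑ j ∈ range N, x j) * (n N : ℝ)⁻¹ * (x i)⁻¹ := fun i => by
      rw [inv_div, div_eq_mul_inv, mul_inv]
      ring
    rw [sum_congr rfl fun i _ => hterm i, ← mul_sum]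
    ring
  simpa only [hid, mul_zero, Pi.inv_apply] using (hx.mul hxinv).mul hn.inv_tendsto_atTop

lemma ae_tendsto_sum_inv_inclusionProb {Ω : Type*} [MeasurableSpace Ω] {P : Measure Ω}
    {X : ℕ → Ω → ℝ} (hindep : Pairwise fun i j => X i ⟂ᵢ[P] X j)
    (hident : ∀ i, IdentDistrib (X i) (X 0) P P) (hint : Integrable (X 0) P)
    (hint_inv : Integrable (fun ω => (X 0 ω)⁻¹) P) {n : ℕ → ℕ}
    (hn : Tendsto (fun N => (n N : ℝ)) atTop atTop) :
    ∀ᵐ ω ∂P, Tendsto (fun N : ℕ => (N : ℝ)⁻¹ ^ 2 *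
      ∑ i ∈ range N, ((n N : ℝ) * X i ω / ∑ j ∈ range N, X j ω)⁻¹) atTop (𝓝 0) := by
  filter_upwards [strong_law_ae_real X hint hindep hident,
    strong_law_ae_real (fun i ω => (X i ω)⁻¹) hint_inv
      (fun i j hij => (hindep hij).comp measurable_inv measurable_inv)
      (fun i => (hident i).comp measurable_inv)] with ω hω hω_inv
  exact tendsto_sum_inv_inclusionProb hω hω_inv hn

theorem stmt_14_general
    {Ω Ω' : Type*} [MeasurableSpace Ω] [MeasurableSpace Ω']
    (P : Measure Ω) [IsProbabilityMeasure P]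
    (Y X : ℕ → Ω → ℝ)
    (hmeas : ∀ i, Measurable fun ω => (Y i ω, X i ω))
    (hindep : iIndepFun (fun i ω => (Y i ω, X i ω)) P)
    (hident : ∀ i, IdentDistrib (fun ω => (Y i ω, X i ω)) (fun ω => (Y 0 ω, X 0 ω)) P P)
    (hpos : ∀ i, ∀ᵐ ω ∂P, 0 < X i ω)
    (hm2 : Integrable (fun ω => X 0 ω ^ 2) P)
    (hminv : Integrable (fun ω => (X 0 ω)⁻¹) P)
    (n : ℕ → ℕ) (f : ℝ) (hf0 : 0 < f)
    (hfN : Tendsto (fun N : ℕ => (n N : ℝ) / N) atTop (𝓝 f))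
    (C : ℝ) (hC : 0 < C)
    (Pd : ℕ → Ω → Measure Ω') (hPd : ∀ N ω, IsProbabilityMeasure (Pd N ω))
    (D : ℕ → ℕ → Ω' → ℝ)
    (hD01 : ∀ N i ω', D N i ω' = 0 ∨ D N i ω' = 1)
    (hDmeas : ∀ N i, Measurable (D N i))
    (hmean : ∀ N (ω : Ω), (∀ j < N, 0 < X j ω) → ∀ i < N,
      ∫ ω', D N i ω' ∂(Pd N ω) = (n N : ℝ) * X i ω / ∑ j ∈ Finset.range N, X j ω)
    (hcov : ∀ N (ω : Ω), (∀ j < N, 0 < X j ω) → ∀ i < N, ∀ j < N, i ≠ j →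
      |(∫ ω', D N i ω' * D N j ω' ∂(Pd N ω)) -
          ((n N : ℝ) * X i ω / ∑ k ∈ Finset.range N, X k ω) *
            ((n N : ℝ) * X j ω / ∑ k ∈ Finset.range N, X k ω)| ≤
        C / N * (((n N : ℝ) * X i ω / ∑ k ∈ Finset.range N, X k ω) *
          ((n N : ℝ) * X j ω / ∑ k ∈ Finset.range N, X k ω))) :
    ∀ᵐ ω ∂P, ∀ ε > (0 : ℝ),
      Tendsto (fun N : ℕ =>
          Pd N ω {ω' | ε < ⨆ y : ℝ,
            |(∑ i ∈ Finset.range N,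
                D N i ω' * ((n N : ℝ) * X i ω / ∑ j ∈ Finset.range N, X j ω)⁻¹ *
                  (if Y i ω ≤ y then (1 : ℝ) else 0)) /
                (∑ i ∈ Finset.range N,
                  D N i ω' * ((n N : ℝ) * X i ω / ∑ j ∈ Finset.range N, X j ω)⁻¹) -
              (N : ℝ)⁻¹ * ∑ i ∈ Finset.range N, (if Y i ω ≤ y then (1 : ℝ) else 0)|})
        atTop (𝓝 0) := by
  have hXint : Integrable (X 0) P :=
    ((memLp_two_iff_integrable_sq (measurable_snd.comp (hmeas 0)).aestronglyMeasurable).mpr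
      hm2).integrable one_le_two
  have hn : Tendsto (fun N => (n N : ℝ)) atTop atTop :=
    (hfN.pos_mul_atTop hf0 tendsto_natCast_atTop_atTop).congr' <|
      (eventually_gt_atTop 0).mono fun N hN => div_mul_cancel₀ _ (Nat.cast_pos.mpr hN).ne'
  filter_upwards [ae_tendsto_sum_inv_inclusionProb
      (fun i j hij => (hindep.indepFun hij).comp measurable_snd measurable_snd)
      (fun i => (hident i).comp measurable_snd) hXint hminv hn,
    ae_all_iff.mpr hpos] with ω hω hposω ε hε
  obtain ⟨m, hm⟩ := exists_nat_one_div_lt (half_pos hε)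
  set δ := min (ε / 8) (1 / 2)
  have hδ0 : 0 < δ := lt_min (by positivity) one_half_pos
  have hkε : 4 * δ + 1 / ((m + 1 : ℕ) : ℝ) < ε := by
    push_cast
    linarith [min_le_left (ε / 8) (1 / 2)]
  have hbound := ((hω.add (tendsto_const_div_atTop_nhds_zero_nat C)).div_const (δ ^ 2)).const_mul
    (2 * ((m + 1 : ℕ) : ℝ) + 1)
  rw [add_zero, zero_div, mul_zero] at hbound
  refine tendsto_of_tendsto_of_tendsto_of_le_of_le' tendsto_const_nhds
    (ENNReal.ofReal_zero ▸ ENNReal.tendsto_ofReal hbound) (.of_forall fun _ => zero_le) ?_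
  filter_upwards [eventually_gt_atTop 0, hn.eventually_gt_atTop 0] with N hN hnN
  have hS : 0 < ∑ j ∈ range N, X j ω :=
    sum_pos (fun j _ => hposω j) ⟨0, mem_range.mpr hN⟩
  have := hPd N ω
  exact measure_lt_iSup_abs_hajek_sub_le hN m.succ_pos
    (fun i _ => div_pos (mul_pos hnN (hposω i)) hS) (hD01 N) (hDmeas N)
    (hmean N ω fun j _ => hposω j) (by positivity) (hcov N ω fun j _ => hposω j) hδ0
    (min_le_right _ _) hkε

/-- Proposition 2 of the paper: Glivenko–Cantelli-type uniform design-consistency of the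
Hájek estimator, for almost all realizations of the superpopulation. -/
theorem stmt_14
    {Ω Ω' : Type*} [MeasurableSpace Ω] [MeasurableSpace Ω']
    (P : Measure Ω) [IsProbabilityMeasure P]
    (Y X : ℕ → Ω → ℝ)
    (hmeas : ∀ i, Measurable fun ω => (Y i ω, X i ω))
    (hindep : iIndepFun (fun i ω => (Y i ω, X i ω)) P)
    (hident : ∀ i, IdentDistrib (fun ω => (Y i ω, X i ω)) (fun ω => (Y 0 ω, X 0 ω)) P P)
    (hpos : ∀ i, ∀ᵐ ω ∂P, 0 < X i ω)
    (hm2 : Integrable (fun ω => X 0 ω ^ 2) P)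
    (hminv : Integrable (fun ω => (X 0 ω)⁻¹) P)
    (n : ℕ → ℕ) (f : ℝ) (hf0 : 0 < f) (hf1 : f < 1)
    (hfN : Tendsto (fun N : ℕ => (n N : ℝ) / N) atTop (𝓝 f))
    (C : ℝ) (hC : 0 < C)
    (Pd : ℕ → Ω → Measure Ω') (hPd : ∀ N ω, IsProbabilityMeasure (Pd N ω))
    (D : ℕ → ℕ → Ω' → ℝ)
    (hD01 : ∀ N i ω', D N i ω' = 0 ∨ D N i ω' = 1)
    (hDmeas : ∀ N i, Measurable (D N i))
    (hmean : ∀ N (ω : Ω), (∀ j < N, 0 < X j ω) → ∀ i < N,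
      ∫ ω', D N i ω' ∂(Pd N ω) = (n N : ℝ) * X i ω / ∑ j ∈ Finset.range N, X j ω)
    (hcov : ∀ N (ω : Ω), (∀ j < N, 0 < X j ω) → ∀ i < N, ∀ j < N, i ≠ j →
      |(∫ ω', D N i ω' * D N j ω' ∂(Pd N ω)) -
          ((n N : ℝ) * X i ω / ∑ k ∈ Finset.range N, X k ω) *
            ((n N : ℝ) * X j ω / ∑ k ∈ Finset.range N, X k ω)| ≤
        C / N * (((n N : ℝ) * X i ω / ∑ k ∈ Finset.range N, X k ω) *
          ((n N : ℝ) * X j ω / ∑ k ∈ Finset.range N, X k ω))) :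
    ∀ᵐ ω ∂P, ∀ ε > (0 : ℝ),
      Tendsto (fun N : ℕ =>
          Pd N ω {ω' | ε < ⨆ y : ℝ,
            |(∑ i ∈ Finset.range N,
                D N i ω' * ((n N : ℝ) * X i ω / ∑ j ∈ Finset.range N, X j ω)⁻¹ *
                  (if Y i ω ≤ y then (1 : ℝ) else 0)) /
                (∑ i ∈ Finset.range N,
                  D N i ω' * ((n N : ℝ) * X i ω / ∑ j ∈ Finset.range N, X j ω)⁻¹) -
              (N : ℝ)⁻¹ * ∑ i ∈ Finset.range N, (if Y i ω ≤ y then (1 : ℝ) else 0)|})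
        atTop (𝓝 0) :=
  stmt_14_general P Y X hmeas hindep hident hpos hm2 hminv n f hf0 hfN C hC Pd hPd D hD01 hDmeas
    hmean hcov
end
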